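/- arXiv:math/0301380 — 10 statements merged into one kernel-verified Lean document; each statement's English description precedes it below -/
import Mathlib

section
/- Let δ > 0 and m₂ > 0. Let f : ℝ → ℝ be twice differentiable with |f''(x)| ≤ m₂ for all x ∈ ℝ, and let f_δ : ℝ → ℝ satisfy ‖f_δ − f‖∞ ≤ δ. Set h = √(2δ/m₂). Then for every x ∈ ℝ, |(f_δ(x + h) − f_δ(x − h))/(2h) − f'(x)| ≤ √(2 δ m₂). -/
/-!
Split the error of the divided difference of `fδ` into noise and truncation. The noise
contributes at most `2δ / (2h) = δ / h`. For the truncation,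
`g t = f (x + t) - f (x - t) - 2 t f' x` vanishes at `0` and
`|g' t| = |(f' (x + t) - f' x) + (f' (x - t) - f' x)| ≤ 2 m₂ t` since `f'` is `m₂`-Lipschitz;
comparing with `m₂ t²` gives `|g h| ≤ m₂ h²`, i.e. a contribution `m₂ h / 2`.
The step `h = √(2δ/m₂)` makes the two contributions equal, and their sum is `√(2 δ m₂)`.
-/

open Set
open scoped NNReal

theorem abs_sub_sub_two_mul_deriv_le {f : ℝ → ℝ} {C : ℝ≥0} (hf : Differentiable ℝ f)
    (hf' : LipschitzWith C (deriv f)) (x : ℝ) {h : ℝ} (hh : 0 ≤ h) :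
    |f (x + h) - f (x - h) - 2 * h * deriv f x| ≤ C * h ^ 2 := by
  set g : ℝ → ℝ := fun t ↦ f (x + t) - f (x - t) - 2 * t * deriv f x
  have hg (t : ℝ) :
      HasDerivAt g (deriv f (x + t) + deriv f (x - t) - 2 * deriv f x) t := by
    have hsum := (((hf _).hasDerivAt.comp_const_add x t).sub
      ((hf _).hasDerivAt.comp_const_sub x t)).sub
        (((hasDerivAt_id t).const_mul 2).mul_const (deriv f x))
    exact hsum.congr_deriv (by ring)
  have hB (t : ℝ) : HasDerivAt (fun t ↦ (C : ℝ) * t ^ 2) (2 * C * t) t :=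
    ((hasDerivAt_pow 2 t).const_mul (C : ℝ)).congr_deriv (by norm_num; ring)
  have bound : ∀ t ∈ Ico 0 h,
      ‖deriv f (x + t) + deriv f (x - t) - 2 * deriv f x‖ ≤ 2 * C * t := fun t ht ↦ by
    have hright := hf'.norm_sub_le (x + t) x
    have hleft := hf'.norm_sub_le (x - t) x
    simp only [Real.norm_eq_abs, add_sub_cancel_left, sub_sub_cancel_left, abs_neg,
      abs_of_nonneg ht.1] at hright hleft ⊢
    calc _ = |(deriv f (x + t) - deriv f x) + (deriv f (x - t) - deriv f x)| := by
          congr 1; ring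
      _ ≤ C * t + C * t := (abs_add_le _ _).trans (add_le_add hright hleft)
      _ = 2 * C * t := by ring
  simpa [g, Real.norm_eq_abs] using image_norm_le_of_norm_deriv_right_le_deriv_boundary
    (fun t _ ↦ (hg t).continuousAt.continuousWithinAt) (fun t _ ↦ (hg t).hasDerivWithinAt)
    (by simp [g]) hB bound (right_mem_Icc.2 hh)

theorem abs_symmetric_difference_quotient_sub_deriv_le {f fδ : ℝ → ℝ} {C : ℝ≥0} {δ : ℝ}
    (hf : Differentiable ℝ f) (hf' : LipschitzWith C (deriv f)) (hfδ : ∀ y, |fδ y - f y| ≤ δ)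
    (x : ℝ) {h : ℝ} (hh : 0 < h) :
    |(fδ (x + h) - fδ (x - h)) / (2 * h) - deriv f x| ≤ δ / h + C * h / 2 := by
  have htrunc := abs_sub_sub_two_mul_deriv_le hf hf' x hh.le
  have hnoise : |(fδ (x + h) - f (x + h)) - (fδ (x - h) - f (x - h))| ≤ 2 * δ :=
    (abs_sub _ _).trans (by linarith [hfδ (x + h), hfδ (x - h)])
  have hsplit : (fδ (x + h) - fδ (x - h)) / (2 * h) - deriv f x =
      (((fδ (x + h) - f (x + h)) - (fδ (x - h) - f (x - h))) +
        (f (x + h) - f (x - h) - 2 * h * deriv f x)) / (2 * h) := by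
    field_simp; ring
  have h2h : 0 < 2 * h := by linarith
  rw [hsplit, abs_div, abs_of_pos h2h, div_le_iff₀ h2h]
  calc _ ≤ 2 * δ + C * h ^ 2 := (abs_add_le _ _).trans (add_le_add hnoise htrunc)
    _ = (δ / h + C * h / 2) * (2 * h) := by field_simp

theorem div_sqrt_add_mul_sqrt_div_two_eq_sqrt {δ m : ℝ} (hδ : 0 ≤ δ) (hm : 0 < m) :
    δ / √(2 * δ / m) + m * √(2 * δ / m) / 2 = √(2 * δ * m) := by
  rcases hδ.eq_or_lt with rfl | hδ
  · simp
  set s := √(2 * δ / m)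
  have hs : 0 < s := Real.sqrt_pos.2 (by positivity)
  have hsq : s ^ 2 = 2 * δ / m := Real.sq_sqrt (by positivity)
  have hms : √(2 * δ * m) = m * s := by
    rw [Real.sqrt_eq_iff_mul_self_eq_of_pos (by positivity)]
    calc m * s * (m * s) = m ^ 2 * s ^ 2 := by ring
      _ = 2 * δ * m := by rw [hsq]; field_simp
  have hδs : δ / s = m * s / 2 := by
    rw [div_eq_iff hs.ne']
    field_simp at hsq ⊢
    linarith
  rw [hδs, hms]; ring

/-- stable numerical differentiation via the symmetric divided
difference with stepsize `h = √(2δ/m₂)`. -/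
theorem stable_differentiation_bound
    (δ m₂ : ℝ) (hδ : 0 < δ) (hm₂ : 0 < m₂)
    (f fδ : ℝ → ℝ)
    (hf : Differentiable ℝ f)
    (hf' : Differentiable ℝ (deriv f))
    (hf'' : ∀ x : ℝ, |deriv (deriv f) x| ≤ m₂)
    (hfδ : ∀ x : ℝ, |fδ x - f x| ≤ δ)
    (h : ℝ) (hh : h = Real.sqrt (2 * δ / m₂)) :
    ∀ x : ℝ,
      |(fδ (x + h) - fδ (x - h)) / (2 * h) - deriv f x| ≤ Real.sqrt (2 * δ * m₂) := by
  intro x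
  have hlip : LipschitzWith m₂.toNNReal (deriv f) :=
    lipschitzWith_of_nnnorm_deriv_le hf' fun y ↦
      (Real.le_toNNReal_iff_coe_le hm₂.le).2 (hf'' y)
  have hpos : 0 < h := hh ▸ Real.sqrt_pos.2 (by positivity)
  calc _ ≤ δ / h + m₂.toNNReal * h / 2 :=
        abs_symmetric_difference_quotient_sub_deriv_le hf hlip hfδ x hpos
    _ = √(2 * δ * m₂) := by
      rw [Real.coe_toNNReal _ hm₂.le, hh, div_sqrt_add_mul_sqrt_div_two_eq_sqrt hδ.le hm₂]
end

section
/- For every δ > 0 and m > 0, there exists a differentiable function f : ℝ → ℝ such that |f(x)| ≤ δ for all x ∈ ℝ, f' is Lipschitz continuous with Lipschitz constant m, and f'(0) = √(2 δ m). -/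
/-!
Take for `f'` the `4h`-periodic triangle wave with slope `±m` and values between `-mh` and `mh`,
and for `f` its primitive vanishing at `0`. Since `f'` is even, `f` is odd; on `[0, 2h]` it is the
parabola `m (h y - y² / 2)`, which vanishes at `2h`, so `f'` has mean zero over a period and `f`
is `4h`-periodic as well. Hence `|f| ≤ m h² / 2`, which is `δ` for `h = √(2δ/m)`, while
`f'(0) = m h = √(2δm)`.
-/

open intervalIntegral Function

noncomputable section

variable (m h : ℝ)

/-- `‖(x : AddCircle p)‖` is the distance from `x` to `pℤ`. -/
def extremalDeriv (x : ℝ) : ℝ := m * (h - ‖(x : AddCircle (4 * h))‖)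

def extremalFun (x : ℝ) : ℝ := ∫ t in 0..x, extremalDeriv m h t

lemma continuous_extremalDeriv : Continuous (extremalDeriv m h) := by
  unfold extremalDeriv
  fun_prop

lemma abs_sub_extremalDeriv_le {m : ℝ} (hm : 0 ≤ m) (h s t : ℝ) :
    |extremalDeriv m h s - extremalDeriv m h t| ≤ m * |s - t| := by
  have hnorm : |‖(t : AddCircle (4 * h))‖ - ‖(s : AddCircle (4 * h))‖| ≤ |s - t| := by
    refine (abs_norm_sub_norm_le _ _).trans ?_
    rw [← AddCircle.coe_sub, abs_sub_comm]
    exact QuotientAddGroup.norm_mk_le_norm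
  calc |extremalDeriv m h s - extremalDeriv m h t|
      = m * |‖(t : AddCircle (4 * h))‖ - ‖(s : AddCircle (4 * h))‖| := by
        rw [extremalDeriv, extremalDeriv, ← mul_sub, abs_mul, abs_of_nonneg hm]
        ring_nf
    _ ≤ m * |s - t| := mul_le_mul_of_nonneg_left hnorm hm

lemma extremalDeriv_periodic : Periodic (extremalDeriv m h) (4 * h) := by
  intro x
  simp [extremalDeriv]

lemma extremalDeriv_neg (x : ℝ) : extremalDeriv m h (-x) = extremalDeriv m h x := by
  simp [extremalDeriv]

lemma extremalDeriv_zero : extremalDeriv m h 0 = m * h := by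
  simp [extremalDeriv]

lemma extremalDeriv_eq_of_abs_le {h : ℝ} (hh : 0 < h) {x : ℝ} (hx : |x| ≤ 2 * h) :
    extremalDeriv m h x = m * (h - |x|) := by
  rw [extremalDeriv, (AddCircle.norm_coe_eq_abs_iff (p := 4 * h) (by positivity)).2]
  rwa [abs_of_pos (by positivity : (0 : ℝ) < 4 * h), show 4 * h / 2 = 2 * h by ring]

lemma hasDerivAt_extremalFun (x : ℝ) : HasDerivAt (extremalFun m h) (extremalDeriv m h x) x :=
  ((continuous_extremalDeriv m h).integral_hasStrictDerivAt 0 x).hasDerivAt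

lemma deriv_extremalFun : deriv (extremalFun m h) = extremalDeriv m h :=
  funext fun x => (hasDerivAt_extremalFun m h x).deriv

lemma extremalFun_neg (x : ℝ) : extremalFun m h (-x) = -extremalFun m h x := by
  calc extremalFun m h (-x) = ∫ t in 0..-x, extremalDeriv m h (-t) := by
        simp only [extremalFun, extremalDeriv_neg]
    _ = -extremalFun m h x := by
        rw [integral_comp_neg, neg_neg, neg_zero, integral_symm, extremalFun]

lemma extremalFun_eq_of_mem_Icc {h : ℝ} (hh : 0 < h) {y : ℝ} (hy : y ∈ Set.Icc 0 (2 * h)) :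
    extremalFun m h y = m * (h * y - y ^ 2 / 2) := by
  have hparabola : ∀ t ∈ Set.uIcc 0 y, extremalDeriv m h t = m * (h - t) := by
    intro t ht
    rw [Set.uIcc_of_le hy.1] at ht
    rw [extremalDeriv_eq_of_abs_le m hh (by rw [abs_of_nonneg ht.1]; linarith [ht.2, hy.2]),
      abs_of_nonneg ht.1]
  rw [extremalFun, integral_congr hparabola, integral_const_mul,
    integral_sub intervalIntegrable_const intervalIntegral.intervalIntegrable_id, integral_id,
    integral_const, smul_eq_mul]
  ring

lemma extremalFun_periodic {h : ℝ} (hh : 0 < h) : Periodic (extremalFun m h) (4 * h) := by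
  have hvanish : extremalFun m h (2 * h) = 0 := by
    rw [extremalFun_eq_of_mem_Icc m hh ⟨by positivity, le_rfl⟩]
    ring
  have hint : ∀ a b, IntervalIntegrable (extremalDeriv m h) MeasureTheory.volume a b :=
    (continuous_extremalDeriv m h).intervalIntegrable
  intro x
  -- `f (x + 4h) - f x` is the integral of `f'` over a period, i.e. `f (2h) - f (-2h) = 0`.
  rw [← sub_eq_zero, extremalFun, extremalFun, integral_interval_sub_left (hint _ _) (hint _ _),
    (extremalDeriv_periodic m h).intervalIntegral_add_eq x (-(2 * h)),
    ← integral_interval_sub_left (hint 0 _) (hint 0 _), show -(2 * h) + 4 * h = 2 * h by ring]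
  rw [← extremalFun, ← extremalFun, extremalFun_neg, hvanish]
  simp

lemma abs_extremalFun_le_of_abs_le {m : ℝ} (hm : 0 ≤ m) {h : ℝ} (hh : 0 < h) {y : ℝ}
    (hy : |y| ≤ 2 * h) : |extremalFun m h y| ≤ m * h ^ 2 / 2 := by
  have hsymm : |extremalFun m h y| = |extremalFun m h (|y|)| := by
    rcases abs_choice y with hy' | hy' <;> rw [hy']
    rw [extremalFun_neg, abs_neg]
  rw [hsymm, extremalFun_eq_of_mem_Icc m hh ⟨abs_nonneg y, hy⟩,
    abs_of_nonneg (mul_nonneg hm (by nlinarith [abs_nonneg y]))]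
  nlinarith [mul_nonneg hm (sq_nonneg (|y| - h))]

lemma abs_extremalFun_le {m : ℝ} (hm : 0 ≤ m) {h : ℝ} (hh : 0 < h) (x : ℝ) :
    |extremalFun m h x| ≤ m * h ^ 2 / 2 := by
  obtain ⟨y, hy, hxy⟩ := (extremalFun_periodic m hh).exists_mem_Ico (by positivity) x (-(2 * h))
  rw [hxy]
  exact abs_extremalFun_le_of_abs_le hm hh (abs_le.2 ⟨hy.1, by linarith [hy.2]⟩)

end

/-- existence of an extremal function: `|f| ≤ δ` everywhere,
`f'` is Lipschitz with constant `m`, and `f'(0) = √(2δm)`. -/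
theorem extremal_function_exists
    (δ m : ℝ) (hδ : 0 < δ) (hm : 0 < m) :
    ∃ f : ℝ → ℝ, Differentiable ℝ f ∧
      (∀ x : ℝ, |f x| ≤ δ) ∧
      (∀ s t : ℝ, |deriv f s - deriv f t| ≤ m * |s - t|) ∧
      deriv f 0 = Real.sqrt (2 * δ * m) := by
  set h := Real.sqrt (2 * δ / m)
  have hh : 0 < h := Real.sqrt_pos.2 (by positivity)
  have hδ_eq : m * h ^ 2 / 2 = δ := by
    rw [Real.sq_sqrt (by positivity)]
    field_simp
  refine ⟨extremalFun m h, fun x => (hasDerivAt_extremalFun m h x).differentiableAt,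
    fun x => hδ_eq ▸ abs_extremalFun_le hm.le hh x, ?_, ?_⟩
  · rw [deriv_extremalFun]
    exact abs_sub_extremalDeriv_le hm.le h
  · rw [deriv_extremalFun, extremalDeriv_zero, eq_comm,
      Real.sqrt_eq_iff_eq_sq (by positivity) (by positivity), mul_pow, Real.sq_sqrt (by positivity)]
    field_simp
end

section
/- Let δ > 0 and m₂ > 0, and let T be an arbitrary map from the set of functions ℝ → ℝ to the set of functions ℝ → ℝ. Then there exists a differentiable function f : ℝ → ℝ with |f(x)| ≤ δ for all x (so the zero function is a δ-approximation of f in the sup norm), with f' Lipschitz continuous with constant m₂, such that sup_{x ∈ ℝ} |(T 0)(x) − f'(x)| ≥ √(2 δ m₂), where 0 denotes the identically zero function. -/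
open scoped ENNReal

/-! Zero data cannot tell `f` from `-f` when `|f| ≤ δ`, so for one of the two the prediction
`T 0` misses the derivative at `0` by at least `|f'(0)|`. Take `f = m₂ P - δ`, where `P` is the
primitive of the tent `max (a - |x|) 0` with `a = √(2δm₂)/m₂`: then `f'` is `m₂`-Lipschitz,
`f` increases from `-δ` to `m₂ a² - δ = δ`, and `f'(0) = m₂ a = √(2δm₂)`. -/

theorem hasDerivAt_sq_max_zero (y : ℝ) :
    HasDerivAt (fun y : ℝ => max y 0 ^ 2) (2 * max y 0) y := by
  refine hasDerivAt_of_hasDerivAt_of_ne' (f := fun y : ℝ => max y 0 ^ 2)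
    (g := fun y => 2 * max y 0) (x := 0) (fun z hz => ?_) (by fun_prop) (by fun_prop) y
  rcases hz.lt_or_gt with hz | hz
  · have hloc : (fun y : ℝ => max y 0 ^ 2) =ᶠ[nhds z] fun _ => 0 := by
      filter_upwards [eventually_lt_nhds hz] with w hw
      simp [max_eq_right hw.le]
    simpa [max_eq_right hz.le] using (hasDerivAt_const z (0 : ℝ)).congr_of_eventuallyEq hloc
  · have hloc : (fun y : ℝ => max y 0 ^ 2) =ᶠ[nhds z] fun w => w ^ 2 := by
      filter_upwards [eventually_gt_nhds hz] with w hw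
      simp [max_eq_left hw.le]
    simpa [max_eq_left hz.le, mul_comm] using (hasDerivAt_pow 2 z).congr_of_eventuallyEq hloc

noncomputable def tent (a x : ℝ) : ℝ :=
  max (a - |x|) 0

/-- Half the second difference, with step `a`, of `y ↦ (max y 0)²`: a closed form of
`∫ t in Iic x, tent a t`. -/
noncomputable def tentPrimitive (a x : ℝ) : ℝ :=
  (max (x + a) 0 ^ 2 - 2 * max x 0 ^ 2 + max (x - a) 0 ^ 2) / 2

theorem max_add_sub_two_mul_max_add_max_sub_eq_tent {a : ℝ} (ha : 0 ≤ a) (x : ℝ) :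
    max (x + a) 0 - 2 * max x 0 + max (x - a) 0 = tent a x := by
  simp only [tent, abs_eq_max_neg, max_def]
  split_ifs <;> linarith

theorem hasDerivAt_tentPrimitive {a : ℝ} (ha : 0 ≤ a) (x : ℝ) :
    HasDerivAt (tentPrimitive a) (tent a x) x := by
  rw [← max_add_sub_two_mul_max_add_max_sub_eq_tent ha]
  exact ((((hasDerivAt_sq_max_zero (x + a)).comp_add_const x a).sub
    ((hasDerivAt_sq_max_zero x).const_mul 2)).add
    ((hasDerivAt_sq_max_zero (x - a)).comp_sub_const x a)).div_const 2 |>.congr_deriv (by ring)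

theorem tentPrimitive_mem_Icc {a : ℝ} (ha : 0 ≤ a) (x : ℝ) :
    tentPrimitive a x ∈ Set.Icc 0 (a ^ 2) := by
  simp only [tentPrimitive, Set.mem_Icc, max_def]
  split_ifs <;> constructor <;> nlinarith

theorem abs_tent_sub_tent_le (a s t : ℝ) : |tent a s - tent a t| ≤ |s - t| :=
  calc |tent a s - tent a t| ≤ |(a - |s|) - (a - |t|)| :=
        abs_max_sub_max_le_abs _ _ _
    _ = |(|t| - |s|)| := by congr 1; ring
    _ ≤ |t - s| := abs_abs_sub_abs_le_abs_sub t s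
    _ = |s - t| := abs_sub_comm t s

theorem exists_bump_deriv_zero_eq {δ m : ℝ} (hδ : 0 ≤ δ) (hm : 0 < m) :
    ∃ f : ℝ → ℝ, Differentiable ℝ f ∧ (∀ x, |f x| ≤ δ) ∧
      (∀ s t, |deriv f s - deriv f t| ≤ m * |s - t|) ∧ deriv f 0 = √(2 * δ * m) := by
  set A := √(2 * δ * m)
  have ha : 0 ≤ A / m := by positivity
  have hma : m * (A / m) = A := by field_simp
  have hma2 : m * (A / m) ^ 2 = 2 * δ := by
    rw [div_pow, Real.sq_sqrt (by positivity)]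
    field_simp
  have hf (x : ℝ) : HasDerivAt (fun x => m * tentPrimitive (A / m) x - δ)
      (m * tent (A / m) x) x :=
    ((hasDerivAt_tentPrimitive ha x).const_mul m).sub_const δ
  refine ⟨_, fun x => (hf x).differentiableAt, fun x => ?_, fun s t => ?_, ?_⟩
  · obtain ⟨h₀, h₁⟩ := tentPrimitive_mem_Icc ha x
    rw [abs_le]
    constructor <;> nlinarith
  · rw [(hf s).deriv, (hf t).deriv, ← mul_sub, abs_mul, abs_of_pos hm]
    exact mul_le_mul_of_nonneg_left (abs_tent_sub_tent_le _ s t) hm.le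
  · rw [(hf 0).deriv, tent, abs_zero, sub_zero, max_eq_left ha, hma]

theorem exists_bump_abs_sub_deriv_zero_ge {δ m : ℝ} (hδ : 0 ≤ δ) (hm : 0 < m) (y : ℝ) :
    ∃ f : ℝ → ℝ, Differentiable ℝ f ∧ (∀ x, |f x| ≤ δ) ∧
      (∀ s t, |deriv f s - deriv f t| ≤ m * |s - t|) ∧ √(2 * δ * m) ≤ |y - deriv f 0| := by
  obtain ⟨f, hf, hfδ, hf', hf0⟩ := exists_bump_deriv_zero_eq hδ hm
  rcases le_total y 0 with hy | hy
  · refine ⟨f, hf, hfδ, hf', ?_⟩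
    rw [hf0, abs_sub_comm, abs_of_nonneg (by linarith [Real.sqrt_nonneg (2 * δ * m)])]
    linarith
  · refine ⟨-f, hf.neg, by simpa using hfδ, fun s t => ?_, ?_⟩
    · rw [deriv.neg, deriv.neg, neg_sub_neg, abs_sub_comm s t]
      exact hf' t s
    · rw [deriv.neg, hf0, sub_neg_eq_add, abs_of_nonneg (by positivity)]
      linarith

/-- for any reconstruction map `T`, there is a function `f` with
`|f| ≤ δ` (so `0` is admissible noisy data for `f`) and `f'` Lipschitz with
constant `m₂`, such that the worst-case error of `T` on the zero data is at
least `√(2δm₂)`. -/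
theorem lower_bound_any_method_j_two
    (δ m₂ : ℝ) (hδ : 0 < δ) (hm₂ : 0 < m₂)
    (T : (ℝ → ℝ) → (ℝ → ℝ)) :
    ∃ f : ℝ → ℝ, Differentiable ℝ f ∧
      (∀ x : ℝ, |f x| ≤ δ) ∧
      (∀ s t : ℝ, |deriv f s - deriv f t| ≤ m₂ * |s - t|) ∧
      ENNReal.ofReal (Real.sqrt (2 * δ * m₂)) ≤
        ⨆ x : ℝ, ENNReal.ofReal |T (fun _ => 0) x - deriv f x| := by
  obtain ⟨f, hf, hfδ, hf', hf0⟩ := exists_bump_abs_sub_deriv_zero_ge hδ.le hm₂ (T (fun _ => 0) 0)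
  exact ⟨f, hf, hfδ, hf', le_iSup_of_le 0 (ENNReal.ofReal_le_ofReal hf0)⟩
end

section
/- Let δ > 0 and m₁ > 0, and let T be an arbitrary map from the set of functions ℝ → ℝ to the set of functions ℝ → ℝ. Then there exists an infinitely differentiable function f : ℝ → ℝ with |f(x)| ≤ δ and |f'(x)| ≤ m₁ for all x, such that sup_{x ∈ ℝ} |(T 0)(x) − f'(x)| ≥ m₁, where 0 denotes the identically zero function. Consequently no operator can estimate f' with error tending to 0 as δ → 0 when only the bounds ‖f − f_δ‖∞ ≤ δ and ‖f'‖∞ ≤ m₁ are known (the case j = 1). -/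
open scoped ENNReal

lemma sine_deriv (s δ c : ℝ) (x : ℝ) :
    HasDerivAt (fun x => s * δ * Real.sin (c * x)) (s * δ * (Real.cos (c * x) * c)) x := by
  have h : HasDerivAt (fun x => Real.sin (c * x)) (Real.cos (c * x) * c) x := by
    have := (Real.hasDerivAt_sin (c * x)).comp x ((hasDerivAt_id x).const_mul c)
    rw [mul_one] at this
    exact this
  simpa using h.const_mul (s * δ)

/-- no map `T` can estimate `f'` with error tending to zero with
`δ` if only `‖f - f_δ‖∞ ≤ δ` and `‖f'‖∞ ≤ m₁` are known: for any `T` there is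
a smooth `f` with `|f| ≤ δ`, `|f'| ≤ m₁`, whose derivative differs from `T 0`
by at least `m₁` in sup norm. -/
theorem no_stable_differentiation_j_one
    (δ m₁ : ℝ) (hδ : 0 < δ) (hm₁ : 0 < m₁)
    (T : (ℝ → ℝ) → (ℝ → ℝ)) :
    ∃ f : ℝ → ℝ, ContDiff ℝ (⊤ : ℕ∞) f ∧
      (∀ x : ℝ, |f x| ≤ δ) ∧
      (∀ x : ℝ, |deriv f x| ≤ m₁) ∧
      ENNReal.ofReal m₁ ≤ ⨆ x : ℝ, ENNReal.ofReal |T (fun _ => 0) x - deriv f x| := by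
  set g := T (fun _ => 0) with hg
  set s : ℝ := if 0 ≤ g 0 then -1 else 1 with hs
  set c : ℝ := m₁ / δ with hc
  refine ⟨fun x => s * δ * Real.sin (c * x), ?_, ?_, ?_, ?_⟩
  · exact (contDiff_const.mul ((Real.contDiff_sin).comp (contDiff_const.mul contDiff_id)))
  · intro x
    have hs1 : |s| = 1 := by simp only [hs]; split <;> norm_num
    calc |s * δ * Real.sin (c * x)| = |s| * |δ| * |Real.sin (c * x)| := by
          rw [abs_mul, abs_mul]
      _ ≤ 1 * δ * 1 := by
          rw [hs1, abs_of_pos hδ]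
          exact mul_le_mul_of_nonneg_left (Real.abs_sin_le_one _) (by positivity)
      _ = δ := by ring
  · intro x
    rw [(sine_deriv s δ c x).deriv]
    have hs1 : |s| = 1 := by simp only [hs]; split <;> norm_num
    have hc' : |c| = m₁ / δ := abs_of_pos (by positivity)
    calc |s * δ * (Real.cos (c * x) * c)| = |s| * |δ| * (|Real.cos (c * x)| * |c|) := by
          rw [abs_mul, abs_mul, abs_mul]
      _ ≤ 1 * δ * (1 * (m₁ / δ)) := by
          rw [hs1, abs_of_pos hδ, hc']
          exact mul_le_mul_of_nonneg_left
            (mul_le_mul_of_nonneg_right (Real.abs_cos_le_one _) (by positivity)) (by positivity)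
      _ = m₁ := by field_simp
  · have hd0 : deriv (fun x => s * δ * Real.sin (c * x)) 0 = s * m₁ := by
      rw [(sine_deriv s δ c 0).deriv]
      simp [hc]
      field_simp
    have key : m₁ ≤ |g 0 - deriv (fun x => s * δ * Real.sin (c * x)) 0| := by
      rw [hd0]
      rcases le_or_gt 0 (g 0) with h | h
      · have : s = -1 := by simp [hs, h]
        rw [this]
        rw [abs_of_nonneg (by linarith)]
        linarith
      · have : s = 1 := by simp [hs, h.not_ge]
        rw [this]
        rw [abs_of_nonpos (by linarith)]
        linarith
    calc ENNReal.ofReal m₁ ≤ ENNReal.ofReal |g 0 - deriv (fun x => s * δ * Real.sin (c * x)) 0| :=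
          ENNReal.ofReal_le_ofReal key
      _ ≤ ⨆ x : ℝ, ENNReal.ofReal |g x - deriv (fun x => s * δ * Real.sin (c * x)) x| :=
          le_iSup (fun x => ENNReal.ofReal |g x - deriv (fun y => s * δ * Real.sin (c * y)) x|) 0
end

section
/- Let n ≥ 2, let D ⊂ ℝⁿ be a bounded measurable set, and let f : ℝⁿ → ℂ be integrable and vanish almost everywhere outside D. Suppose that for all z₁, z₂ ∈ ℂⁿ with z₁ · z₁ = 0 and z₂ · z₂ = 0 one has ∫_D f(x) exp((z₁ + z₂) · x) dx = 0. Then f = 0 almost everywhere. (In particular, the pair {∇², ∇²} has property C: products of harmonic exponentials are total in L²(D).) -/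
/-!
Since `f` vanishes outside `D`, the hypothesis says that `∫ f(x) exp((z₁ + z₂) · x) dx = 0`
over all of `ℝⁿ`. For `n ≥ 2`, every purely imaginary vector `2i a` with `a ∈ ℝⁿ` is such a sum:
pick `b ⊥ a` with `|b| = |a|`, then `z = i a ± b` satisfies `z · z = |b|² - |a|² ± 2i a · b = 0`.
Taking `a = -π ξ` shows that the Fourier transform of `f` vanishes identically. Finally every
bump function `g` is the Fourier transform of a Schwartz function `ψ`, so by self-adjointness
`∫ g f = ∫ ψ 𝓕f = 0`, and `f = 0` almost everywhere.
-/

open MeasureTheory Complex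
open scoped InnerProductSpace ContDiff FourierTransform Matrix

theorem MeasureTheory.Integrable.ae_eq_zero_of_fourier_eq_zero {V E : Type*}
    [NormedAddCommGroup V] [InnerProductSpace ℝ V] [FiniteDimensional ℝ V]
    [MeasurableSpace V] [BorelSpace V] [NormedAddCommGroup E] [NormedSpace ℂ E] [CompleteSpace E]
    {f : V → E} (hf : Integrable f) (h𝓕f : 𝓕 f = 0) : f =ᵐ[volume] 0 := by
  refine ae_eq_zero_of_integral_contDiff_smul_eq_zero hf.locallyIntegrable fun g hg hgc => ?_
  let φ : SchwartzMap V ℂ :=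
    (hgc.comp_left ofReal_zero).toSchwartzMap (ofRealCLM.contDiff.comp hg)
  let ψ : SchwartzMap V ℂ := 𝓕⁻ φ
  have hψ : 𝓕 (ψ : V → ℂ) = φ := by
    rw [← SchwartzMap.fourier_coe, FourierTransform.fourier_fourierInv_eq]
  have hself_adjoint := VectorFourier.integral_fourierIntegral_smul_eq_flip (L := innerₗ V)
    Real.continuous_fourierChar continuous_inner (ψ.integrable (μ := volume)) hf
  rw [flip_innerₗ] at hself_adjoint
  calc ∫ x, g x • f x = ∫ x, 𝓕 (ψ : V → ℂ) x • f x := by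
        simp_rw [hψ]
        exact integral_congr_ae (.of_forall fun x => (coe_smul (g x) (f x)).symm)
    _ = ∫ ξ, ψ ξ • 𝓕 f ξ := hself_adjoint
    _ = 0 := by simp [h𝓕f]

theorem exists_inner_eq_zero_norm_eq {V : Type*} [NormedAddCommGroup V] [InnerProductSpace ℝ V]
    (hV : 2 ≤ Module.finrank ℝ V) (v : V) : ∃ u : V, ⟪u, v⟫_ℝ = 0 ∧ ‖u‖ = ‖v‖ := by
  have hspan : (ℝ ∙ v) ≠ ⊤ := fun htop => by
    have := finrank_span_le_card (R := ℝ) ({v} : Set V)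
    rw [htop, finrank_top, Set.toFinset_singleton, Finset.card_singleton] at this
    omega
  obtain ⟨u, hu, hu0⟩ := Submodule.exists_mem_ne_zero_of_ne_bot
    (mt Submodule.orthogonal_eq_bot_iff.1 hspan)
  refine ⟨(‖v‖ / ‖u‖) • u, ?_, ?_⟩
  · rw [real_inner_smul_left, Submodule.inner_left_of_mem_orthogonal
      (Submodule.mem_span_singleton_self v) hu, mul_zero]
  · rw [norm_smul, Real.norm_of_nonneg (by positivity), div_mul_cancel₀ _ (norm_ne_zero_iff.2 hu0)]

section Isotropic

variable {ι : Type*} [Fintype ι]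

theorem EuclideanSpace.ofReal_inner (a b : EuclideanSpace ℝ ι) :
    ((⟪a, b⟫_ℝ : ℝ) : ℂ) = ∑ k, (a k : ℂ) * b k := by
  simp [PiLp.inner_apply, mul_comm]

theorem dotProduct_self_I_mul_add_eq_zero {a b : EuclideanSpace ℝ ι} (hab : ⟪a, b⟫_ℝ = 0)
    (hnorm : ‖a‖ = ‖b‖) :
    (fun k => I * a k + b k) ⬝ᵥ (fun k => I * a k + b k) = 0 := by
  have hterm : ∀ k, (I * a k + b k) * (I * a k + b k)
      = (b k : ℂ) * b k - (a k : ℂ) * a k + 2 * I * ((a k : ℂ) * b k) := fun k => by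
    linear_combination (a k : ℂ) ^ 2 * I_mul_I
  simp only [dotProduct, hterm, Finset.sum_add_distrib, Finset.sum_sub_distrib, ← Finset.mul_sum,
    ← EuclideanSpace.ofReal_inner, real_inner_self_eq_norm_sq, hab, hnorm]
  simp

theorem exists_isotropic_add_eq (hι : 2 ≤ Fintype.card ι) (a : EuclideanSpace ℝ ι) :
    ∃ z₁ z₂ : ι → ℂ, z₁ ⬝ᵥ z₁ = 0 ∧ z₂ ⬝ᵥ z₂ = 0 ∧ z₁ + z₂ = fun k => 2 * I * a k := by
  obtain ⟨b, hba, hb⟩ := exists_inner_eq_zero_norm_eq (by simpa using hι) a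
  refine ⟨fun k => I * a k + b k, fun k => I * a k + (-b) k, ?_, ?_, ?_⟩
  · exact dotProduct_self_I_mul_add_eq_zero (real_inner_comm a b ▸ hba) hb.symm
  · refine dotProduct_self_I_mul_add_eq_zero ?_ (by rw [norm_neg, hb])
    rw [inner_neg_right, real_inner_comm, hba, neg_zero]
  · ext k
    simp only [Pi.add_apply, PiLp.neg_apply, ofReal_neg]
    ring

end Isotropic

theorem property_C_laplacian_general
    (n : ℕ) (hn : 2 ≤ n)
    (D : Set (EuclideanSpace ℝ (Fin n)))
    (f : EuclideanSpace ℝ (Fin n) → ℂ)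
    (hf : Integrable f)
    (hsupp : ∀ᵐ x : EuclideanSpace ℝ (Fin n), x ∉ D → f x = 0)
    (horth : ∀ z₁ z₂ : Fin n → ℂ,
      (∑ k, z₁ k * z₁ k) = 0 → (∑ k, z₂ k * z₂ k) = 0 →
      ∫ x in D, f x * Complex.exp (∑ k, (z₁ k + z₂ k) * (x k : ℂ)) = 0) :
    f =ᵐ[volume] 0 := by
  refine hf.ae_eq_zero_of_fourier_eq_zero (funext fun ξ => ?_)
  obtain ⟨z₁, z₂, hz₁, hz₂, hz⟩ :=
    exists_isotropic_add_eq (by simpa using hn) ((-Real.pi) • ξ)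
  have hexponent : ∀ x : EuclideanSpace ℝ (Fin n),
      ∑ k, (z₁ k + z₂ k) * x k = ↑(-2 * Real.pi * ⟪x, ξ⟫_ℝ) * I := fun x => by
    simp only [← Pi.add_apply z₁, hz, mul_assoc, ← Finset.mul_sum, ← EuclideanSpace.ofReal_inner,
      real_inner_comm x, real_inner_smul_right]
    push_cast
    ring
  calc 𝓕 f ξ = ∫ x, f x * cexp (∑ k, (z₁ k + z₂ k) * x k) := by
        simp_rw [Real.fourier_eq', hexponent, smul_eq_mul, mul_comm]
    _ = ∫ x in D, f x * cexp (∑ k, (z₁ k + z₂ k) * x k) :=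
        (setIntegral_eq_integral_of_ae_compl_eq_zero
          (hsupp.mono fun x hx hxD => by rw [hx hxD, zero_mul])).symm
    _ = 0 := horth z₁ z₂ hz₁ hz₂

/-- property C for the pair `{∇², ∇²}`: if an integrable function
supported in a bounded set `D ⊂ ℝⁿ` is orthogonal to all products of harmonic
exponentials `exp(z₁·x) exp(z₂·x)` with `z₁·z₁ = z₂·z₂ = 0`, then `f = 0` a.e. -/
theorem property_C_laplacian
    (n : ℕ) (hn : 2 ≤ n)
    (D : Set (EuclideanSpace ℝ (Fin n)))
    (hD : Bornology.IsBounded D) (hDm : MeasurableSet D)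
    (f : EuclideanSpace ℝ (Fin n) → ℂ)
    (hf : Integrable f)
    (hsupp : ∀ᵐ x : EuclideanSpace ℝ (Fin n), x ∉ D → f x = 0)
    (horth : ∀ z₁ z₂ : Fin n → ℂ,
      (∑ k, z₁ k * z₁ k) = 0 → (∑ k, z₂ k * z₂ k) = 0 →
      ∫ x in D, f x * Complex.exp (∑ k, (z₁ k + z₂ k) * (x k : ℂ)) = 0) :
    f =ᵐ[volume] 0 :=
  property_C_laplacian_general n hn D f hf hsupp horth
end

section
/- Let n ≥ 2 and let D ⊂ ℝⁿ be a nonempty bounded open set. Then the linear span of the set of functions of the form x ↦ h₁(x) h₂(x), where h₁, h₂ : ℝⁿ → ℂ are smooth harmonic functions on ℝⁿ (i.e., Σ_{k=1}^n ∂²h_m/∂x_k² = 0 on all of ℝⁿ for m = 1, 2), restricted to D, is dense in L²(D, ℂ). -/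
open MeasureTheory Complex
open scoped RealInnerProductSpace ENNReal

noncomputable def linC (n : ℕ) (a : Fin n → ℂ) : EuclideanSpace ℝ (Fin n) →L[ℝ] ℂ :=
  ∑ k, a k • (Complex.ofRealCLM.restrictScalars ℝ).comp (EuclideanSpace.proj k)

lemma linC_apply (n : ℕ) (a : Fin n → ℂ) (x : EuclideanSpace ℝ (Fin n)) :
    linC n a x = ∑ k, a k * (x k : ℂ) := by
  simp [linC, ContinuousLinearMap.sum_apply, mul_comm]

lemma linC_single (n : ℕ) (a : Fin n → ℂ) (k : Fin n) :
    linC n a (EuclideanSpace.single k 1) = a k := by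
  rw [linC_apply]
  rw [Finset.sum_eq_single k] <;> simp +contextual [EuclideanSpace.single_apply]

noncomputable def expChar (n : ℕ) (a : Fin n → ℂ) (x : EuclideanSpace ℝ (Fin n)) : ℂ :=
  Complex.exp (linC n a x)

lemma contDiff_expChar (n : ℕ) (a : Fin n → ℂ) : ContDiff ℝ (⊤ : ℕ∞) (expChar n a) :=
  Complex.contDiff_exp.comp (linC n a).contDiff

lemma hasFDerivAt_expChar (n : ℕ) (a : Fin n → ℂ) (x : EuclideanSpace ℝ (Fin n)) :
    HasFDerivAt (expChar n a) (expChar n a x • linC n a) x := by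
  have h1 := ((Complex.hasDerivAt_exp (linC n a x)).hasFDerivAt.restrictScalars ℝ).comp x
    (linC n a).hasFDerivAt
  refine h1.congr_fderiv ?_
  ext v
  simp [expChar, mul_comm]

lemma expChar_harmonic (n : ℕ) (a : Fin n → ℂ) (ha : ∑ k, (a k)^2 = 0)
    (x : EuclideanSpace ℝ (Fin n)) :
    ∑ k, fderiv ℝ (fun y => fderiv ℝ (expChar n a) y (EuclideanSpace.single k 1)) x
      (EuclideanSpace.single k 1) = 0 := by
  have hg : ∀ k : Fin n, (fun y => fderiv ℝ (expChar n a) y (EuclideanSpace.single k 1))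
      = fun y => a k * expChar n a y := by
    intro k
    funext y
    rw [(hasFDerivAt_expChar n a y).fderiv]
    simp [linC_single, mul_comm]
  have key : ∀ k : Fin n,
      fderiv ℝ (fun y => fderiv ℝ (expChar n a) y (EuclideanSpace.single k 1)) x
        (EuclideanSpace.single k 1) = a k ^ 2 * expChar n a x := by
    intro k
    rw [hg k]
    have h2 : HasFDerivAt (fun y => a k * expChar n a y)
        (a k • (expChar n a x • linC n a)) x := (hasFDerivAt_expChar n a x).const_mul (a k)
    rw [h2.fderiv]
    simp [linC_single]
    ring
  simp only [key, ← Finset.sum_mul, ha, zero_mul]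

lemma expChar_add_coeff (n : ℕ) (a b : Fin n → ℂ) (x : EuclideanSpace ℝ (Fin n)) :
    expChar n (fun k => a k + b k) x = expChar n a x * expChar n b x := by
  simp [expChar, linC_apply, ← Complex.exp_add, add_mul, Finset.sum_add_distrib]

lemma sum_sq_coeff (n : ℕ) (ξ w : EuclideanSpace ℝ (Fin n)) (s : ℂ) (hs : s ^ 2 = 1)
    (h1 : ∑ k, w k * ξ k = 0) (h2 : ∑ k, (w k) ^ 2 = ∑ k, (ξ k) ^ 2) :
    ∑ k, ((Complex.I * ξ k + s * w k) / 2) ^ 2 = 0 := by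
  have e : ∀ k : Fin n, ((Complex.I * ξ k + s * w k) / 2) ^ 2
      = (-(((ξ k : ℝ) ^ 2 : ℝ) : ℂ) + s ^ 2 * (((w k : ℝ) ^ 2 : ℝ) : ℂ)) / 4
        + (s * Complex.I / 2) * (((w k * ξ k : ℝ) : ℂ)) := by
    intro k
    push_cast
    linear_combination ((ξ k : ℂ) ^ 2 / 4) * Complex.I_sq
  rw [Finset.sum_congr rfl fun k _ => e k, Finset.sum_add_distrib, ← Finset.sum_div,
    ← Finset.mul_sum]
  have c1 : (∑ k, ((w k * ξ k : ℝ) : ℂ)) = ((∑ k, w k * ξ k : ℝ) : ℂ) := by push_cast; ring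
  have c2 : (∑ k, (-(((ξ k : ℝ) ^ 2 : ℝ) : ℂ) + s ^ 2 * (((w k : ℝ) ^ 2 : ℝ) : ℂ)))
      = -((∑ k, (ξ k) ^ 2 : ℝ) : ℂ) + s ^ 2 * ((∑ k, (w k) ^ 2 : ℝ) : ℂ) := by
    push_cast; rw [Finset.sum_add_distrib]; simp [Finset.mul_sum]
  rw [c1, c2, h1, h2, hs]
  simp

lemma exists_ortho (n : ℕ) (hn : 2 ≤ n) (ξ : EuclideanSpace ℝ (Fin n)) :
    ∃ w : EuclideanSpace ℝ (Fin n),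
      (∑ k, w k * ξ k = 0) ∧ (∑ k, (w k) ^ 2 = ∑ k, (ξ k) ^ 2) := by
  have inner_eq : ∀ x y : EuclideanSpace ℝ (Fin n), (inner ℝ x y : ℝ) = ∑ k, x k * y k := by
    intro x y
    simp [PiLp.inner_apply, RCLike.inner_apply, mul_comm]
  rcases eq_or_ne ξ 0 with rfl | hξ
  · exact ⟨0, by simp, by simp⟩
  · have hfd : FiniteDimensional ℝ (EuclideanSpace ℝ (Fin n)) := by infer_instance
    set K := (ℝ ∙ ξ)ᗮ with hK
    have hrank : Module.finrank ℝ (ℝ ∙ ξ) = 1 := finrank_span_singleton hξ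
    have htot : Module.finrank ℝ (ℝ ∙ ξ) + Module.finrank ℝ K = n := by
      rw [Submodule.finrank_add_finrank_orthogonal]
      simp
    have hKpos : 0 < Module.finrank ℝ K := by omega
    have hKne : K ≠ ⊥ := by
      intro h
      rw [h] at hKpos
      simp at hKpos
    obtain ⟨u, huK, hu0⟩ := Submodule.exists_mem_ne_zero_of_ne_bot hKne
    have huξ : (inner ℝ u ξ : ℝ) = 0 := by
      have := (Submodule.mem_orthogonal _ u).1 huK ξ (Submodule.mem_span_singleton_self ξ)
      rwa [real_inner_comm] at this
    refine ⟨(‖ξ‖ / ‖u‖) • u, ?_, ?_⟩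
    · have : (inner ℝ ((‖ξ‖ / ‖u‖) • u) ξ : ℝ) = 0 := by
        rw [real_inner_smul_left, huξ, mul_zero]
      rwa [inner_eq] at this
    · have hw : ‖(‖ξ‖ / ‖u‖) • u‖ = ‖ξ‖ := by
        rw [norm_smul, Real.norm_eq_abs, abs_div, _root_.abs_of_nonneg (norm_nonneg ξ),
          _root_.abs_of_nonneg (norm_nonneg u), div_mul_cancel₀]
        exact norm_ne_zero_iff.2 hu0
      have h1 : (inner ℝ ((‖ξ‖ / ‖u‖) • u) ((‖ξ‖ / ‖u‖) • u) : ℝ) = (inner ℝ ξ ξ : ℝ) := by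
        rw [real_inner_self_eq_norm_sq, real_inner_self_eq_norm_sq, hw]
      rw [inner_eq, inner_eq] at h1
      simpa [pow_two] using h1

lemma exists_split (n : ℕ) (hn : 2 ≤ n) (ξ : EuclideanSpace ℝ (Fin n)) :
    ∃ a b : Fin n → ℂ, (∑ k, (a k) ^ 2 = 0) ∧ (∑ k, (b k) ^ 2 = 0) ∧
      ∀ k, a k + b k = Complex.I * ξ k := by
  obtain ⟨w, h1, h2⟩ := exists_ortho n hn ξ
  refine ⟨fun k => (Complex.I * ξ k + w k) / 2, fun k => (Complex.I * ξ k + (-1) * w k) / 2,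
    ?_, ?_, fun k => by ring⟩
  · simpa using sum_sq_coeff n ξ w 1 (by norm_num) h1 h2
  · exact sum_sq_coeff n ξ w (-1) (by norm_num) h1 h2
/-- products of globally smooth harmonic functions are total in
`L²(D)` for any nonempty bounded open `D ⊂ ℝⁿ`, `n ≥ 2`: every `f ∈ L²(D)` can
be approximated in `L²(D)` arbitrarily well by finite linear combinations of
products `h₁ h₂` of harmonic functions. -/
theorem products_of_harmonic_functions_dense
    (n : ℕ) (hn : 2 ≤ n)
    (D : Set (EuclideanSpace ℝ (Fin n)))
    (hD : Bornology.IsBounded D) (hDo : IsOpen D) (hDne : D.Nonempty)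
    (f : EuclideanSpace ℝ (Fin n) → ℂ)
    (hf : MemLp f 2 (volume.restrict D)) :
    ∀ ε : ℝ, 0 < ε →
      ∃ (N : ℕ) (c : Fin N → ℂ)
        (h₁ h₂ : Fin N → (EuclideanSpace ℝ (Fin n) → ℂ)),
        (∀ i, ContDiff ℝ (⊤ : ℕ∞) (h₁ i) ∧
          ∀ x, (∑ k, fderiv ℝ (fun y => fderiv ℝ (h₁ i) y (EuclideanSpace.single k 1)) x
            (EuclideanSpace.single k 1)) = 0) ∧
        (∀ i, ContDiff ℝ (⊤ : ℕ∞) (h₂ i) ∧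
          ∀ x, (∑ k, fderiv ℝ (fun y => fderiv ℝ (h₂ i) y (EuclideanSpace.single k 1)) x
            (EuclideanSpace.single k 1)) = 0) ∧
        eLpNorm (fun x => f x - ∑ i, c i * h₁ i x * h₂ i x) 2 (volume.restrict D)
          < ENNReal.ofReal ε := by
  intro ε hε
  classical
  have hDm : MeasurableSet D := hDo.measurableSet
  have hXc : IsCompact (closure D) := hD.isCompact_closure
  haveI : CompactSpace (closure D) := isCompact_iff_compactSpace.mp hXc
  -- Step 1: approximate by a compactly supported continuous function
  have hf' : MemLp (D.indicator f) 2 volume := (memLp_indicator_iff_restrict hDm).2 hf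
  have hε4 : (ENNReal.ofReal (ε / 4)) ≠ 0 := by
    simp only [ne_eq, ENNReal.ofReal_eq_zero, not_le]
    positivity
  obtain ⟨g, gsupp, hfg, gcont, gmem⟩ :=
    hf'.exists_hasCompactSupport_eLpNorm_sub_le (by norm_num : (2 : ℝ≥0∞) ≠ ⊤) hε4
  -- Step 2: Stone-Weierstrass setup on X = closure D
  set X := closure D with hX
  let charCM : EuclideanSpace ℝ (Fin n) → C(X, ℂ) := fun ξ =>
    ⟨fun x => expChar n (fun k => Complex.I * ξ k) x.1,
      (contDiff_expChar n _).continuous.comp continuous_subtype_val⟩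
  let M : Submodule ℂ C(X, ℂ) := Submodule.span ℂ (Set.range charCM)
  have hmulchar : ∀ ξ η, charCM ξ * charCM η = charCM (ξ + η) := by
    intro ξ η; ext x
    simp only [ContinuousMap.mul_apply, charCM, ContinuousMap.coe_mk]
    rw [← expChar_add_coeff]
    congr 1
    funext k
    simp [PiLp.add_apply, mul_add]
  have honechar : charCM 0 = 1 := by
    ext x
    simp [charCM, expChar, linC_apply]
  have hstarchar : ∀ ξ, star (charCM ξ) = charCM (-ξ) := by
    intro ξ; ext x
    simp only [ContinuousMap.star_apply, charCM, ContinuousMap.coe_mk, expChar]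
    rw [show (star : ℂ → ℂ) = (starRingEnd ℂ) from rfl, ← Complex.exp_conj]
    congr 1
    rw [linC_apply, linC_apply, map_sum]
    refine Finset.sum_congr rfl fun k _ => ?_
    simp [Complex.conj_ofReal, PiLp.neg_apply]
  have honeM : (1 : C(X, ℂ)) ∈ M := honechar ▸ Submodule.subset_span ⟨0, rfl⟩
  have hmulM : ∀ x ∈ M, ∀ y ∈ M, x * y ∈ M := by
    intro x hx
    refine Submodule.span_induction (p := fun x _ => ∀ y ∈ M, x * y ∈ M) ?_ ?_ ?_ ?_ hx
    · rintro _ ⟨ξ, rfl⟩ y hy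
      refine Submodule.span_induction (p := fun y _ => charCM ξ * y ∈ M) ?_ ?_ ?_ ?_ hy
      · rintro _ ⟨η, rfl⟩
        rw [hmulchar]
        exact Submodule.subset_span ⟨ξ + η, rfl⟩
      · show charCM ξ * 0 ∈ M
        rw [mul_zero]; exact zero_mem M
      · intro a b _ _ hA hB
        show charCM ξ * (a + b) ∈ M
        rw [mul_add]; exact add_mem hA hB
      · intro r a _ hA
        show charCM ξ * (r • a) ∈ M
        rw [mul_smul_comm]; exact Submodule.smul_mem M r hA
    · intro y _
      show (0 : C(X, ℂ)) * y ∈ M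
      rw [zero_mul]; exact zero_mem M
    · intro a b _ _ hA hB y hy
      show (a + b) * y ∈ M
      rw [add_mul]; exact add_mem (hA y hy) (hB y hy)
    · intro r a _ hA y hy
      show (r • a) * y ∈ M
      rw [smul_mul_assoc]; exact Submodule.smul_mem M r (hA y hy)
  have hstarM : ∀ x ∈ M, star x ∈ M := by
    intro x hx
    refine Submodule.span_induction (p := fun x _ => star x ∈ M) ?_ ?_ ?_ ?_ hx
    · rintro _ ⟨ξ, rfl⟩
      rw [hstarchar]
      exact Submodule.subset_span ⟨-ξ, rfl⟩
    · show star (0 : C(X, ℂ)) ∈ M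
      rw [star_zero]; exact zero_mem M
    · intro a b _ _ hA hB
      show star (a + b) ∈ M
      rw [star_add]; exact add_mem hA hB
    · intro r a _ hA
      show star (r • a) ∈ M
      rw [star_smul]; exact Submodule.smul_mem M _ hA
  let A : StarSubalgebra ℂ C(X, ℂ) :=
    { M.toSubalgebra honeM (fun x y hx hy => hmulM x hx y hy) with
      star_mem' := fun hx => hstarM _ hx }
  have hAM : ∀ q : C(X, ℂ), q ∈ A ↔ q ∈ M := fun q => Iff.rfl
  -- separates points
  have hsep : A.SeparatesPoints := by
    intro x y hxy
    have hxy' : (x : EuclideanSpace ℝ (Fin n)) ≠ (y : EuclideanSpace ℝ (Fin n)) :=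
      fun h => hxy (Subtype.ext h)
    obtain ⟨k, hk⟩ : ∃ k, (x : EuclideanSpace ℝ (Fin n)) k ≠ (y : EuclideanSpace ℝ (Fin n)) k := by
      by_contra h
      push_neg at h
      exact hxy' (PiLp.ext h)
    set c : ℝ := Real.pi / ((x : EuclideanSpace ℝ (Fin n)) k - (y : EuclideanSpace ℝ (Fin n)) k)
      with hc
    refine ⟨_, ⟨charCM (c • EuclideanSpace.single k 1), Submodule.subset_span ⟨_, rfl⟩, rfl⟩, ?_⟩
    have hval : ∀ z : X, charCM (c • EuclideanSpace.single k 1) z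
        = Complex.exp (Complex.I * c * ((z : EuclideanSpace ℝ (Fin n)) k : ℂ)) := by
      intro z
      simp only [charCM, ContinuousMap.coe_mk, expChar, linC_apply]
      congr 1
      rw [Finset.sum_eq_single k]
      · simp [PiLp.smul_apply, EuclideanSpace.single_apply]
        try ring
      · intro j _ hj
        simp [PiLp.smul_apply, EuclideanSpace.single_apply, hj]
      · simp
    intro heq
    simp only at heq
    rw [hval x, hval y] at heq
    have hexp : Complex.exp (Complex.I * c * ((x : EuclideanSpace ℝ (Fin n)) k : ℂ)
        - Complex.I * c * ((y : EuclideanSpace ℝ (Fin n)) k : ℂ)) = 1 := by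
      rw [Complex.exp_sub, heq, div_self (Complex.exp_ne_zero _)]
    have harg : Complex.I * c * ((x : EuclideanSpace ℝ (Fin n)) k : ℂ)
        - Complex.I * c * ((y : EuclideanSpace ℝ (Fin n)) k : ℂ) = Real.pi * Complex.I := by
      have hsub : (c : ℂ) * (((x : EuclideanSpace ℝ (Fin n)) k : ℂ)
          - ((y : EuclideanSpace ℝ (Fin n)) k : ℂ)) = (Real.pi : ℂ) := by
        rw [hc]
        push_cast
        rw [div_mul_cancel₀]
        exact sub_ne_zero.2 (by exact_mod_cast hk)
      calc Complex.I * c * ((x : EuclideanSpace ℝ (Fin n)) k : ℂ)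
          - Complex.I * c * ((y : EuclideanSpace ℝ (Fin n)) k : ℂ)
          = Complex.I * ((c : ℂ) * (((x : EuclideanSpace ℝ (Fin n)) k : ℂ)
            - ((y : EuclideanSpace ℝ (Fin n)) k : ℂ))) := by ring
        _ = Real.pi * Complex.I := by rw [hsub]; ring
    rw [harg, Complex.exp_pi_mul_I] at hexp
    norm_num at hexp
  have htop := ContinuousMap.starSubalgebra_topologicalClosure_eq_top_of_separatesPoints A hsep
  -- the approximant from the closure
  let gX : C(X, ℂ) := ⟨fun x => g x.1, gcont.comp continuous_subtype_val⟩
  have hV : volume D ≠ ⊤ := hD.measure_lt_top.ne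
  set t : ℝ := (volume D).toReal ^ ((2 : ℝ)⁻¹) with ht
  have htnn : 0 ≤ t := Real.rpow_nonneg ENNReal.toReal_nonneg _
  set δ : ℝ := (ε / 4) / (t + 1) with hδdef
  have hδ : 0 < δ := by positivity
  have hgXcl : gX ∈ closure (A : Set C(X, ℂ)) := by
    have h1 : (A.topologicalClosure : Set C(X, ℂ)) = closure (A : Set C(X, ℂ)) :=
      StarSubalgebra.topologicalClosure_coe A
    rw [← h1, htop]
    trivial
  obtain ⟨p, hpA, hpd⟩ := Metric.mem_closure_iff.1 hgXcl δ hδ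
  have hpM : p ∈ M := hpA
  obtain ⟨N, c, q, hq⟩ := Submodule.mem_span_set'.1 hpM
  choose ξ hξ using fun i => (q i).2
  choose a b ha hb hab using fun i => exists_split n hn (ξ i)
  refine ⟨N, c, fun i => expChar n (a i), fun i => expChar n (b i),
    fun i => ⟨contDiff_expChar n _, expChar_harmonic n _ (ha i)⟩,
    fun i => ⟨contDiff_expChar n _, expChar_harmonic n _ (hb i)⟩, ?_⟩
  -- the L² estimate
  set P : EuclideanSpace ℝ (Fin n) → ℂ :=
    fun x => ∑ i, c i * expChar n (a i) x * expChar n (b i) x with hPdef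
  have hPchar : ∀ (i : Fin N) (x : EuclideanSpace ℝ (Fin n)),
      expChar n (a i) x * expChar n (b i) x = expChar n (fun k => Complex.I * ξ i k) x := by
    intro i x
    rw [← expChar_add_coeff]
    congr 1
    funext k
    exact hab i k
  have hPeval : ∀ (x : EuclideanSpace ℝ (Fin n)) (hx : x ∈ X), P x = p ⟨x, hx⟩ := by
    intro x hx
    rw [← hq]
    rw [hPdef]
    simp only [ContinuousMap.coe_sum, Finset.sum_apply, ContinuousMap.coe_smul, Pi.smul_apply,
      smul_eq_mul]
    refine Finset.sum_congr rfl fun i _ => ?_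
    rw [mul_assoc, hPchar i x, ← hξ i]
    rfl
  have hPcont : Continuous P := by
    refine continuous_finset_sum _ fun i _ => ?_
    exact (continuous_const.mul (contDiff_expChar n (a i)).continuous).mul
      (contDiff_expChar n (b i)).continuous
  -- key bounds
  have key1 : eLpNorm (fun x => D.indicator f x - g x) 2 (volume.restrict D)
      ≤ ENNReal.ofReal (ε / 4) := by
    refine le_trans ?_ hfg
    exact eLpNorm_mono_measure _ Measure.restrict_le_self
  have key2 : eLpNorm (fun x => g x - P x) 2 (volume.restrict D) ≤ ENNReal.ofReal (ε / 4) := by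
    have hbd : ∀ᵐ x ∂(volume.restrict D), ‖g x - P x‖ ≤ δ := by
      filter_upwards [ae_restrict_mem hDm] with x hx
      have hxX : x ∈ X := subset_closure hx
      have : g x - P x = gX ⟨x, hxX⟩ - p ⟨x, hxX⟩ := by
        rw [hPeval x hxX]; rfl
      rw [this]
      calc ‖gX ⟨x, hxX⟩ - p ⟨x, hxX⟩‖ = dist (gX ⟨x, hxX⟩) (p ⟨x, hxX⟩) := by
            rw [dist_eq_norm]
        _ ≤ dist gX p := ContinuousMap.dist_apply_le_dist _
        _ ≤ δ := le_of_lt hpd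
    calc eLpNorm (fun x => g x - P x) 2 (volume.restrict D)
        ≤ (volume.restrict D) Set.univ ^ (2 : ℝ≥0∞).toReal⁻¹ * ENNReal.ofReal δ :=
          eLpNorm_le_of_ae_bound hbd
      _ = volume D ^ ((2 : ℝ)⁻¹) * ENNReal.ofReal δ := by
          rw [Measure.restrict_apply_univ]
          norm_num
      _ ≤ ENNReal.ofReal (ε / 4) := by
          rw [← ENNReal.ofReal_toReal hV,
            ENNReal.ofReal_rpow_of_nonneg ENNReal.toReal_nonneg (by norm_num : (0:ℝ) ≤ (2:ℝ)⁻¹),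
            ← ENNReal.ofReal_mul (by positivity)]
          refine ENNReal.ofReal_le_ofReal ?_
          rw [← ht, hδdef]
          rw [div_eq_mul_inv (ε / 4), ← mul_assoc, mul_comm t (ε / 4), mul_assoc]
          have h1 : t * (t + 1)⁻¹ ≤ 1 := by
            rw [← div_eq_mul_inv, div_le_one (by positivity)]
            linarith
          nlinarith [mul_le_of_le_one_right (le_of_lt (by positivity : (0:ℝ) < ε / 4)) h1]
  -- triangle inequality
  have hcongr : eLpNorm (fun x => f x - P x) 2 (volume.restrict D)
      = eLpNorm (fun x => D.indicator f x - P x) 2 (volume.restrict D) := by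
    refine eLpNorm_congr_ae ?_
    filter_upwards [ae_restrict_mem hDm] with x hx
    rw [Set.indicator_of_mem hx]
  have meas1 : AEStronglyMeasurable (fun x => D.indicator f x - g x) (volume.restrict D) :=
    (hf'.aestronglyMeasurable.sub gcont.aestronglyMeasurable).restrict
  have meas2 : AEStronglyMeasurable (fun x => g x - P x) (volume.restrict D) :=
    (gcont.sub hPcont).aestronglyMeasurable.restrict
  have htri : eLpNorm (fun x => D.indicator f x - P x) 2 (volume.restrict D)
      ≤ eLpNorm (fun x => D.indicator f x - g x) 2 (volume.restrict D)
        + eLpNorm (fun x => g x - P x) 2 (volume.restrict D) := by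
    have hfun : (fun x => D.indicator f x - P x)
        = (fun x => D.indicator f x - g x) + (fun x => g x - P x) := by
      funext x
      simp [sub_add_sub_cancel]
    rw [hfun]
    exact eLpNorm_add_le meas1 meas2 one_le_two
  calc eLpNorm (fun x => f x - ∑ i, c i * expChar n (a i) x * expChar n (b i) x) 2
        (volume.restrict D)
      = eLpNorm (fun x => f x - P x) 2 (volume.restrict D) := rfl
    _ = eLpNorm (fun x => D.indicator f x - P x) 2 (volume.restrict D) := hcongr
    _ ≤ ENNReal.ofReal (ε / 4) + ENNReal.ofReal (ε / 4) :=
        le_trans htri (add_le_add key1 key2)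
    _ = ENNReal.ofReal (ε / 2) := by
        rw [← ENNReal.ofReal_add (by positivity) (by positivity)]
        congr 1
        ring
    _ < ENNReal.ofReal ε := by
        rw [ENNReal.ofReal_lt_ofReal_iff hε]
        linarith
end

section
/- Let n ≥ 3, k > 0, ξ ∈ ℝⁿ and R > 0. Then there exist θ₁, θ₂ ∈ ℂⁿ with θ₁ · θ₁ = 1, θ₂ · θ₂ = 1, k(θ₁ + θ₂) = ξ, and |θ₁| ≥ R, where |θ₁| denotes the Euclidean norm of θ₁ in ℂⁿ. -/
/-!
Write `θ = x + i y` with `x, y ∈ ℝⁿ`; then `θ · θ = ‖x‖² - ‖y‖² + 2i⟪x, y⟫`. Since `n ≥ 3`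
there are orthonormal `e₀, e₁` orthogonal to `ξ`, and `θ₁,₂ = ξ/(2k) ± (α e₀ + i β e₁)` lie on
`M` as soon as `‖ξ/(2k)‖² + α² - β² = 1`. This only needs `β ≥ ‖ξ/(2k)‖`, so `β` is free to be
large, and `‖θ₁‖ ≥ β`.
-/

open RealInnerProductSpace Module

theorem exists_orthonormal_orthogonal_of_lt_finrank {E : Type*} [NormedAddCommGroup E]
    [InnerProductSpace ℝ E] [FiniteDimensional ℝ E] {m : ℕ} (h : m < finrank ℝ E) (x : E) :
    ∃ e : Fin m → E, Orthonormal ℝ e ∧ ∀ j, ⟪x, e j⟫ = 0 := by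
  have hK : m ≤ finrank ℝ (ℝ ∙ x)ᗮ := by
    have hsum := Submodule.finrank_add_finrank_orthogonal (ℝ ∙ x)
    have hline : finrank ℝ (ℝ ∙ x) ≤ 1 := (finrank_span_le_card {x}).trans (by simp)
    omega
  let b := stdOrthonormalBasis ℝ (ℝ ∙ x)ᗮ
  refine ⟨(ℝ ∙ x)ᗮ.subtypeₗᵢ ∘ b ∘ Fin.castLE hK, ?_, fun j => ?_⟩
  · exact (b.orthonormal.comp _ (Fin.castLE_injective hK)).comp_linearIsometry _
  · exact Submodule.mem_orthogonal_singleton_iff_inner_right.mp (b _).2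

section Complexify

variable {ι : Type*}

def complexify (x y : EuclideanSpace ℝ ι) : EuclideanSpace ℂ ι :=
  WithLp.toLp 2 fun i => ⟨x i, y i⟩

@[simp]
theorem complexify_apply (x y : EuclideanSpace ℝ ι) (i : ι) : complexify x y i = ⟨x i, y i⟩ :=
  rfl

variable [Fintype ι]

theorem sum_complexify_mul_self (x y : EuclideanSpace ℝ ι) :
    ∑ i, complexify x y i * complexify x y i = ⟨‖x‖ ^ 2 - ‖y‖ ^ 2, 2 * ⟪x, y⟫⟩ := by
  rw [EuclideanSpace.real_norm_sq_eq, EuclideanSpace.real_norm_sq_eq, PiLp.inner_apply]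
  apply Complex.ext
  · simp only [Complex.re_sum, complexify_apply, Complex.mul_re, Finset.sum_sub_distrib, sq]
  · simp only [Complex.im_sum, complexify_apply, Complex.mul_im, Finset.mul_sum,
      RCLike.inner_apply', conj_trivial]
    exact Finset.sum_congr rfl fun i _ => by ring

theorem norm_complexify_sq (x y : EuclideanSpace ℝ ι) :
    ‖complexify x y‖ ^ 2 = ‖x‖ ^ 2 + ‖y‖ ^ 2 := by
  rw [EuclideanSpace.norm_sq_eq, EuclideanSpace.real_norm_sq_eq, EuclideanSpace.real_norm_sq_eq,
    ← Finset.sum_add_distrib]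
  simp only [complexify_apply, Complex.sq_norm, Complex.normSq_mk, ← sq]

theorem norm_le_norm_complexify (x y : EuclideanSpace ℝ ι) : ‖y‖ ≤ ‖complexify x y‖ := by
  have := norm_complexify_sq x y
  nlinarith [norm_nonneg y, norm_nonneg (complexify x y), sq_nonneg ‖x‖]

theorem sum_complexify_mul_self_eq_one {x : EuclideanSpace ℝ ι} {e : Fin 2 → EuclideanSpace ℝ ι}
    (he : Orthonormal ℝ e) (hx : ∀ j, ⟪x, e j⟫ = 0) {α β : ℝ} (h : ‖x‖ ^ 2 + α ^ 2 - β ^ 2 = 1) :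
    ∑ i, complexify (x + α • e 0) (β • e 1) i * complexify (x + α • e 0) (β • e 1) i = 1 := by
  rw [sum_complexify_mul_self]
  apply Complex.ext
  · simp only [norm_add_sq_real, norm_smul, inner_smul_right, hx 0, he.1 0, he.1 1,
      Real.norm_eq_abs]
    simpa using h
  · simp [inner_add_left, inner_smul_left, inner_smul_right, hx 1,
      he.2 (by decide : (0 : Fin 2) ≠ 1)]

end Complexify

theorem complex_unit_variety_decomposition_general
    (n : ℕ) (hn : 3 ≤ n) (k : ℝ) (hk : 0 < k)
    (ξ : EuclideanSpace ℝ (Fin n)) (R : ℝ) :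
    ∃ θ₁ θ₂ : EuclideanSpace ℂ (Fin n),
      (∑ i, θ₁ i * θ₁ i) = 1 ∧
      (∑ i, θ₂ i * θ₂ i) = 1 ∧
      (∀ i, (k : ℂ) * (θ₁ i + θ₂ i) = (ξ i : ℂ)) ∧
      R ≤ ‖θ₁‖ := by
  set x := (2 * k)⁻¹ • ξ
  obtain ⟨e, he, hxe⟩ := exists_orthonormal_orthogonal_of_lt_finrank (m := 2)
    (by rw [finrank_euclideanSpace_fin]; omega) x
  set β := max R ‖x‖
  set α := √(1 - ‖x‖ ^ 2 + β ^ 2)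
  have hαβ : ‖x‖ ^ 2 + α ^ 2 - β ^ 2 = 1 := by
    rw [Real.sq_sqrt (by nlinarith [le_max_right R ‖x‖, norm_nonneg x])]
    ring
  refine ⟨complexify (x + α • e 0) (β • e 1), complexify (x + (-α) • e 0) ((-β) • e 1),
    sum_complexify_mul_self_eq_one he hxe hαβ,
    sum_complexify_mul_self_eq_one he hxe (by simpa using hαβ), fun i => ?_, ?_⟩
  · apply Complex.ext
    · simp only [complexify_apply, Complex.mul_re, Complex.add_re, Complex.add_im,
        Complex.ofReal_re, Complex.ofReal_im, PiLp.add_apply, PiLp.smul_apply, smul_eq_mul, x]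
      field_simp
      ring
    · simp
  · calc R ≤ β := le_max_left _ _
      _ = ‖β • e 1‖ := by
        rw [norm_smul, he.1 1, mul_one,
          Real.norm_of_nonneg ((norm_nonneg x).trans (le_max_right _ _))]
      _ ≤ _ := norm_le_norm_complexify _ _

/-- for `n ≥ 3`, any `ξ ∈ ℝⁿ` can be written as `k(θ₁ + θ₂)` with
`θ₁, θ₂` on the complex unit variety `M = {θ ∈ ℂⁿ : θ·θ = 1}` and `|θ₁|`
arbitrarily large. -/
theorem complex_unit_variety_decomposition
    (n : ℕ) (hn : 3 ≤ n) (k : ℝ) (hk : 0 < k)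
    (ξ : EuclideanSpace ℝ (Fin n)) (R : ℝ) (hR : 0 < R) :
    ∃ θ₁ θ₂ : EuclideanSpace ℂ (Fin n),
      (∑ i, θ₁ i * θ₁ i) = 1 ∧
      (∑ i, θ₂ i * θ₂ i) = 1 ∧
      (∀ i, (k : ℂ) * (θ₁ i + θ₂ i) = (ξ i : ℂ)) ∧
      R ≤ ‖θ₁‖ :=
  complex_unit_variety_decomposition_general n hn k hk ξ R
end

section
/- Let D ⊂ ℝ³ be a nonempty bounded open set, and let θ ∈ ℂ³ satisfy θ · θ = 1 and Im θ ≠ 0. Let S² ⊂ ℝ³ be the unit sphere with its surface measure dα. Then for every C > 0 there exists ε > 0 such that every ν ∈ L²(S², ℂ) satisfying ‖e^{iθ·x} − ∫_{S²} ν(α) e^{iα·x} dα‖_{L²(D)} ≤ ε must have ‖ν‖_{L²(S²)} ≥ C. In other words, if ν_ε approximates the exponentially growing solution e^{iθ·x} in L²(D) to within ε by a superposition of plane waves e^{iα·x}, α ∈ S², then ‖ν_ε‖_{L²(S²)} → ∞ as ε → 0. -/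
/-!
Suppose, for a contradiction, that `‖ν_n‖_{L²(S²)} < C` while `e^{iθ·x} - W_{ν_n} → 0` in `L²(D)`,
where `W_ν` is the Herglotz wave function of `ν`. The `L¹` norms of the `ν_n` are then bounded, so
the `W_{ν_n}` are uniformly Lipschitz, and this equicontinuity upgrades convergence in `L²(D)` to
pointwise convergence on `D`. Along the line `x₀ + z v` with `v = -Im θ`, the `W_{ν_n}` continue
to entire functions of `z` that are uniformly bounded and Lipschitz on every disc; by
Arzelà–Ascoli a subsequence converges uniformly there, to a holomorphic limit which agrees with
`z ↦ e^{iθ·(x₀ + z v)}` on a real segment, hence on the whole disc. But on the real axis the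
`W_{ν_n}` are bounded by `sup ‖ν_n‖_{L¹}`, while `|e^{iθ·(x₀ + t v)}| = e^{-Im θ·x₀ + t |Im θ|²}`
is unbounded.
-/

open MeasureTheory Complex Metric Filter Set
open scoped NNReal ENNReal Topology RealInnerProductSpace BoundedContinuousFunction

noncomputable section

section Lp

variable {X F : Type*} [MeasurableSpace X] [NormedAddCommGroup F] {μ : Measure X}
  {p : ℝ≥0∞} {f : X → F}

lemma ofReal_mul_rpow_le_eLpNorm_restrict {s t : Set X} (hs : MeasurableSet s) (hst : s ⊆ t)
    (hμs : μ s ≠ 0) (hp : p ≠ 0) {c : ℝ} (hc : 0 ≤ c) (hf : ∀ x ∈ s, c ≤ ‖f x‖) :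
    ENNReal.ofReal c * μ s ^ (1 / p.toReal) ≤ eLpNorm f p (μ.restrict t) := by
  have hμts : μ.restrict t s = μ s := by rw [Measure.restrict_apply hs, inter_eq_left.2 hst]
  calc ENNReal.ofReal c * μ s ^ (1 / p.toReal)
      = eLpNorm (s.indicator fun _ => c) p (μ.restrict t) := by
        rw [eLpNorm_indicator_const' hs (hμts ▸ hμs) hp, hμts, Real.enorm_of_nonneg hc]
    _ ≤ eLpNorm f p (μ.restrict t) := by
        refine eLpNorm_mono fun x => ?_
        by_cases hx : x ∈ s
        · simpa [indicator_of_mem hx, abs_of_nonneg hc] using hf x hx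
        · simp [indicator_of_notMem hx]

theorem tendsto_apply_of_tendsto_eLpNorm_restrict [TopologicalSpace X] [OpensMeasurableSpace X]
    [μ.IsOpenPosMeasure] (hp : p ≠ 0) {D : Set X} (hD : IsOpen D) {y : X} (hy : y ∈ D)
    {ι : Type*} {l : Filter ι} {u : ι → X → F} {g : X → F} (hu : EquicontinuousAt u y)
    (hg : ContinuousAt g y)
    (hlim : Tendsto (fun i => eLpNorm (fun x => g x - u i x) p (μ.restrict D)) l (𝓝 0)) :
    Tendsto (fun i => u i y) l (𝓝 (g y)) := by
  refine Metric.tendsto_nhds.2 fun ε hε => ?_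
  have hε3 : 0 < ε / 3 := by positivity
  obtain ⟨U, hUsub, hUo, hyU⟩ := mem_nhds_iff.1 <|
    (Metric.equicontinuousAt_iff_right.1 hu _ hε3).and
      ((Metric.continuousAt_iff'.1 hg _ hε3).and (hD.mem_nhds hy))
  have hUD : U ⊆ D := fun x hx => (hUsub hx).2.2
  have hμU : μ U ≠ 0 := (hUo.measure_pos μ ⟨y, hyU⟩).ne'
  have hη : 0 < ENNReal.ofReal (ε / 3) * μ U ^ (1 / p.toReal) := by
    refine ENNReal.mul_pos (ENNReal.ofReal_pos.2 hε3).ne' ?_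
    exact (ENNReal.rpow_pos_of_nonneg (pos_iff_ne_zero.2 hμU) (by positivity)).ne'
  filter_upwards [(tendsto_order.1 hlim).2 _ hη] with i hi
  by_contra! hfar
  refine hi.not_ge (ofReal_mul_rpow_le_eLpNorm_restrict hUo.measurableSet hUD hμU hp hε3.le
    fun x hx => ?_)
  obtain ⟨hux, hgx, -⟩ := hUsub hx
  have := dist_triangle4 (u i y) (u i x) (g x) (g y)
  rw [dist_eq_norm (u i x), ← norm_neg, neg_sub] at this
  linarith [hux i]

lemma integral_norm_le_of_eLpNorm_two_le [IsFiniteMeasure μ] (hf : AEStronglyMeasurable f μ)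
    {C : ℝ} (hC : 0 ≤ C) (h : eLpNorm f 2 μ ≤ ENNReal.ofReal C) :
    ∫ x, ‖f x‖ ∂μ ≤ C * μ.real univ ^ (1 / 2 : ℝ) := by
  have h12 : eLpNorm f 1 μ ≤ eLpNorm f 2 μ * μ univ ^ (1 / 2 : ℝ) := by
    convert eLpNorm_le_eLpNorm_mul_rpow_measure_univ (p := 1) (q := 2) (by norm_num) hf using 3
    norm_num
  rw [integral_norm_eq_lintegral_enorm hf, ← eLpNorm_one_eq_lintegral_enorm, measureReal_def,
    ENNReal.toReal_rpow, ← ENNReal.toReal_ofReal hC, ← ENNReal.toReal_mul]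
  exact ENNReal.toReal_mono (by finiteness) (h12.trans (by gcongr))

end Lp

theorem exists_subseq_tendstoUniformlyOn_of_lipschitzOnWith {X Y : Type*} [PseudoMetricSpace X]
    [MetricSpace Y] {K : Set X} (hK : IsCompact K) {s : Set Y} (hs : IsCompact s) {κ : ℝ≥0}
    {f : ℕ → X → Y} (hlip : ∀ n, LipschitzOnWith κ (f n) K) (hmaps : ∀ n, MapsTo (f n) K s) :
    ∃ (F : X → Y) (φ : ℕ → ℕ), StrictMono φ ∧ TendstoUniformlyOn (fun n => f (φ n)) F atTop K := by
  classical
  have : CompactSpace K := isCompact_iff_compactSpace.1 hK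
  let u : ℕ → K →ᵇ Y := fun n =>
    .mkOfCompact ⟨K.domRestrict (f n), (hlip n).continuousOn.domRestrict⟩
  have hequi : Equicontinuous ((↑) : range u → K → Y) := by
    refine (LipschitzWith.uniformEquicontinuous _ κ ?_).equicontinuous
    rintro ⟨_, n, rfl⟩
    exact (lipschitzOnWith_iff_restrict.1 (hlip n))
  have hcpt := BoundedContinuousFunction.arzela_ascoli s hs (range u)
    (by rintro _ x ⟨n, rfl⟩; exact hmaps n x.2) hequi
  obtain ⟨a, -, φ, hφ, hlim⟩ := hcpt.tendsto_subseq fun n => subset_closure (mem_range_self n)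
  refine ⟨fun x => if hx : x ∈ K then a ⟨x, hx⟩ else f 0 x, φ, hφ, ?_⟩
  rw [tendstoUniformlyOn_iff_tendstoUniformly_comp_coe]
  convert BoundedContinuousFunction.tendsto_iff_tendstoUniformly.1 hlim using 1
  · rfl
  · ext x
    simp [x.2]

/-- A weak form of Vitali's convergence theorem. -/
theorem exists_subseq_tendsto_of_frequently_tendsto {E : Type*} [NormedAddCommGroup E]
    [NormedSpace ℂ E] [CompleteSpace E] {K U : Set ℂ} (hK : IsCompact K) (hUo : IsOpen U)
    (hUc : IsPreconnected U) (hUK : U ⊆ K) {s : Set E} (hs : IsCompact s) {κ : ℝ≥0}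
    {f : ℕ → ℂ → E} {g : ℂ → E} (hf : ∀ n, DifferentiableOn ℂ (f n) U)
    (hlip : ∀ n, LipschitzOnWith κ (f n) K) (hmaps : ∀ n, MapsTo (f n) K s)
    (hg : DifferentiableOn ℂ g U) {z₀ : ℂ} (hz₀ : z₀ ∈ U)
    (hlim : ∃ᶠ z in 𝓝[≠] z₀, Tendsto (fun n => f n z) atTop (𝓝 (g z))) :
    ∃ φ : ℕ → ℕ, StrictMono φ ∧ ∀ z ∈ U, Tendsto (fun n => f (φ n) z) atTop (𝓝 (g z)) := by
  obtain ⟨F, φ, hφ, hF⟩ := exists_subseq_tendstoUniformlyOn_of_lipschitzOnWith hK hs hlip hmaps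
  have hFU : DifferentiableOn ℂ F U :=
    (hF.mono hUK).tendstoLocallyUniformlyOn.differentiableOn
      (Eventually.of_forall fun n => hf (φ n)) hUo
  have hFg : EqOn F g U := by
    refine (hFU.analyticOnNhd hUo).eqOn_of_preconnected_of_frequently_eq (hg.analyticOnNhd hUo)
      hUc hz₀ ?_
    refine (hlim.and_eventually (eventually_nhdsWithin_of_eventually_nhds
      (hUo.mem_nhds hz₀))).mono fun z ⟨hz, hzU⟩ => ?_
    exact tendsto_nhds_unique (hF.tendsto_at (hUK hzU)) (hz.comp hφ.tendsto_atTop)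
  exact ⟨φ, hφ, fun z hz => hFg hz ▸ hF.tendsto_at (hUK hz)⟩

lemma norm_integral_mul_le_of_norm_le {X : Type*} [MeasurableSpace X] {μ : Measure X}
    {f k : X → ℂ} (hf : Integrable f μ) {L B : ℝ} (hL : ∫ x, ‖f x‖ ∂μ ≤ L) (hB : 0 ≤ B)
    (hk : ∀ x, ‖k x‖ ≤ B) : ‖∫ x, f x * k x ∂μ‖ ≤ L * B :=
  calc ‖∫ x, f x * k x ∂μ‖ ≤ ∫ x, ‖f x‖ * B ∂μ :=
        norm_integral_le_of_norm_le (hf.norm.mul_const B) (.of_forall fun x => by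
          rw [norm_mul]; exact mul_le_mul_of_nonneg_left (hk x) (norm_nonneg _))
    _ ≤ L * B := by rw [integral_mul_const]; exact mul_le_mul_of_nonneg_right hL hB

lemma norm_exp_I_mul_le (a b : ℝ) (z : ℂ) :
    ‖exp (I * (a + z * b))‖ ≤ Real.exp (|z.im| * |b|) := by
  have hre : (I * (a + z * b)).re = -(z.im * b) := by simp
  rw [norm_exp, Real.exp_le_exp, ← abs_mul, hre]
  exact neg_le_abs _

section Herglotz

variable {E : Type*} [NormedAddCommGroup E] [InnerProductSpace ℝ E]

lemma abs_inner_le_of_mem_sphere (α : sphere (0 : E) 1) (v : E) : |⟪(α : E), v⟫| ≤ ‖v‖ := by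
  simpa using abs_real_inner_le_norm (α : E) v

def lineWave (x₀ v : E) (z : ℂ) (α : sphere (0 : E) 1) : ℂ :=
  exp (I * (⟪(α : E), x₀⟫ + z * ⟪(α : E), v⟫))

lemma norm_lineWave_le (x₀ v : E) (z : ℂ) (α : sphere (0 : E) 1) :
    ‖lineWave x₀ v z α‖ ≤ Real.exp (|z.im| * ‖v‖) :=
  (norm_exp_I_mul_le _ _ z).trans <| Real.exp_le_exp.2 <|
    mul_le_mul_of_nonneg_left (abs_inner_le_of_mem_sphere α v) (abs_nonneg _)

lemma norm_lineWave_mul_le (x₀ v : E) (z : ℂ) (α : sphere (0 : E) 1) :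
    ‖lineWave x₀ v z α * (I * ⟪(α : E), v⟫)‖ ≤ ‖v‖ * Real.exp (|z.im| * ‖v‖) := by
  rw [norm_mul, norm_mul, norm_I, one_mul, norm_real, Real.norm_eq_abs, mul_comm]
  exact mul_le_mul (abs_inner_le_of_mem_sphere α v) (norm_lineWave_le x₀ v z α)
    (norm_nonneg _) (norm_nonneg _)

lemma continuous_lineWave (x₀ v : E) (z : ℂ) : Continuous (lineWave x₀ v z) := by
  unfold lineWave; fun_prop

lemma hasDerivAt_lineWave (x₀ v : E) (z : ℂ) (α : sphere (0 : E) 1) :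
    HasDerivAt (lineWave x₀ v · α) (lineWave x₀ v z α * (I * ⟪(α : E), v⟫)) z := by
  have : HasDerivAt (fun w : ℂ => I * (⟪(α : E), x₀⟫ + w * ⟪(α : E), v⟫))
      (I * ⟪(α : E), v⟫) z := by
    simpa using (((hasDerivAt_id z).mul_const (⟪(α : E), v⟫ : ℂ)).const_add _).const_mul I
  exact this.cexp

variable [MeasurableSpace E] [OpensMeasurableSpace E] {μ : Measure (sphere (0 : E) 1)}
  {ν : sphere (0 : E) 1 → ℂ} {L : ℝ}

variable (μ ν) in
def herglotz (x : E) : ℂ := ∫ α, ν α * exp (I * ⟪(α : E), x⟫) ∂μ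

variable (μ ν) in
/-- The Herglotz wave function continued to the complex line `x₀ + ℂ v`. -/
def herglotzLine (x₀ v : E) (z : ℂ) : ℂ := ∫ α, ν α * lineWave x₀ v z α ∂μ

omit [OpensMeasurableSpace E] in
lemma herglotz_add_smul (x₀ v : E) (t : ℝ) :
    herglotz μ ν (x₀ + t • v) = herglotzLine μ ν x₀ v t := by
  simp [herglotz, herglotzLine, lineWave, inner_add_right, inner_smul_right]

lemma integrable_mul_lineWave (hν : Integrable ν μ) (x₀ v : E) (z : ℂ) :
    Integrable (fun α => ν α * lineWave x₀ v z α) μ :=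
  hν.mul_bdd (continuous_lineWave x₀ v z).aestronglyMeasurable
    (.of_forall (norm_lineWave_le x₀ v z))

lemma hasDerivAt_herglotzLine (hν : Integrable ν μ) (x₀ v : E) (z : ℂ) :
    HasDerivAt (herglotzLine μ ν x₀ v)
      (∫ α, ν α * (lineWave x₀ v z α * (I * ⟪(α : E), v⟫)) ∂μ) z := by
  have hball : ∀ w ∈ ball z 1, |w.im| ≤ |z.im| + 1 := fun w hw => by
    have := (abs_sub_abs_le_abs_sub w.im z.im).trans (abs_im_le_norm (w - z))
    rw [mem_ball_iff_norm] at hw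
    linarith
  refine (hasDerivAt_integral_of_dominated_loc_of_deriv_le (ball_mem_nhds z one_pos)
    (.of_forall fun w => (integrable_mul_lineWave hν x₀ v w).1)
    (integrable_mul_lineWave hν x₀ v z)
    (hν.aestronglyMeasurable.mul
      ((continuous_lineWave x₀ v z).mul (by fun_prop)).aestronglyMeasurable)
    (.of_forall fun α w hw => ?_)
    (hν.norm.mul_const (‖v‖ * Real.exp ((|z.im| + 1) * ‖v‖)))
    (.of_forall fun α w _ => (hasDerivAt_lineWave x₀ v w α).const_mul (ν α))).2
  rw [norm_mul]
  refine mul_le_mul_of_nonneg_left ((norm_lineWave_mul_le x₀ v w α).trans ?_) (norm_nonneg _)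
  gcongr
  exact hball w hw

lemma differentiable_herglotzLine (hν : Integrable ν μ) (x₀ v : E) :
    Differentiable ℂ (herglotzLine μ ν x₀ v) :=
  fun z => (hasDerivAt_herglotzLine hν x₀ v z).differentiableAt

omit [OpensMeasurableSpace E] in
lemma norm_herglotzLine_le (hν : Integrable ν μ) (hL : ∫ α, ‖ν α‖ ∂μ ≤ L) (x₀ v : E) (z : ℂ) :
    ‖herglotzLine μ ν x₀ v z‖ ≤ L * Real.exp (|z.im| * ‖v‖) :=
  norm_integral_mul_le_of_norm_le hν hL (Real.exp_nonneg _) (norm_lineWave_le x₀ v z)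

lemma lipschitzOnWith_herglotzLine (hν : Integrable ν μ) (hL : ∫ α, ‖ν α‖ ∂μ ≤ L) (x₀ v : E)
    (r : ℝ) : LipschitzOnWith (L * ‖v‖ * Real.exp (r * ‖v‖)).toNNReal (herglotzLine μ ν x₀ v)
      {z | |z.im| ≤ r} := by
  have hconv : Convex ℝ {z : ℂ | |z.im| ≤ r} := by
    have : {z : ℂ | |z.im| ≤ r} = imLm ⁻¹' closedBall 0 r := by ext z; simp
    exact this ▸ (convex_closedBall (0 : ℝ) r).linear_preimage imLm
  refine hconv.lipschitzOnWith_of_nnnorm_hasDerivWithin_le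
    (fun z _ => (hasDerivAt_herglotzLine hν x₀ v z).hasDerivWithinAt) fun z hz => ?_
  rw [← NNReal.coe_le_coe, coe_nnnorm, Real.coe_toNNReal']
  refine le_max_of_le_left ((norm_integral_mul_le_of_norm_le hν hL (by positivity)
    (norm_lineWave_mul_le x₀ v z)).trans ?_)
  have hL0 : 0 ≤ L := (integral_nonneg fun _ => norm_nonneg _).trans hL
  rw [mul_assoc]
  gcongr
  exact hz

lemma lipschitzWith_herglotz (hν : Integrable ν μ) (hL : ∫ α, ‖ν α‖ ∂μ ≤ L) :
    LipschitzWith L.toNNReal (herglotz μ ν) := by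
  have hL0 : 0 ≤ L := (integral_nonneg fun _ => norm_nonneg _).trans hL
  refine LipschitzWith.of_dist_le_mul fun x y => ?_
  have h := (lipschitzOnWith_herglotzLine hν hL y (x - y) 0).dist_le_mul 1 (by simp) 0 (by simp)
  rw [← ofReal_one, ← ofReal_zero, ← herglotz_add_smul, ← herglotz_add_smul,
    Real.coe_toNNReal _ (by positivity)] at h
  simpa [Real.coe_toNNReal _ hL0, dist_eq_norm x y] using h

omit [OpensMeasurableSpace E] in
lemma norm_herglotzLine_ofReal_le (hν : Integrable ν μ) (hL : ∫ α, ‖ν α‖ ∂μ ≤ L) (x₀ v : E)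
    (t : ℝ) : ‖herglotzLine μ ν x₀ v t‖ ≤ L := by
  simpa using norm_herglotzLine_le hν hL x₀ v t

lemma tendsto_herglotz_of_tendsto_eLpNorm {ρ : Measure E} [ρ.IsOpenPosMeasure] {p : ℝ≥0∞}
    (hp : p ≠ 0) {ν : ℕ → sphere (0 : E) 1 → ℂ} (hν : ∀ n, Integrable (ν n) μ)
    (hL : ∀ n, ∫ α, ‖ν n α‖ ∂μ ≤ L) {w : E → ℂ} (hw : Continuous w) {D : Set E} (hD : IsOpen D)
    (hlim : Tendsto (fun n => eLpNorm (fun x => w x - herglotz μ (ν n) x) p (ρ.restrict D))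
      atTop (𝓝 0)) :
    ∀ y ∈ D, Tendsto (fun n => herglotz μ (ν n) y) atTop (𝓝 (w y)) := fun y hy =>
  tendsto_apply_of_tendsto_eLpNorm_restrict hp hD hy
    ((LipschitzWith.uniformEquicontinuous _ _ fun n =>
      lipschitzWith_herglotz (hν n) (hL n)).equicontinuous y) hw.continuousAt hlim

omit [OpensMeasurableSpace E] in
lemma frequently_tendsto_herglotzLine {ν : ℕ → sphere (0 : E) 1 → ℂ} {w : E → ℂ} {D : Set E}
    (hD : IsOpen D) (hw : ∀ y ∈ D, Tendsto (fun n => herglotz μ (ν n) y) atTop (𝓝 (w y)))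
    {x₀ : E} (hx₀ : x₀ ∈ D) (v : E) {W : ℂ → ℂ} (hW : ∀ t : ℝ, W t = w (x₀ + t • v)) :
    ∃ᶠ z in 𝓝[≠] (0 : ℂ), Tendsto (fun n => herglotzLine μ (ν n) x₀ v z) atTop (𝓝 (W z)) := by
  have hnear : ∀ᶠ t : ℝ in 𝓝 0, x₀ + t • v ∈ D :=
    (by fun_prop : Continuous fun t : ℝ => x₀ + t • v).tendsto 0 (by simpa using hD.mem_nhds hx₀)
  have hofReal : Tendsto ((↑) : ℝ → ℂ) (𝓝[≠] 0) (𝓝[≠] 0) :=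
    continuous_ofReal.continuousWithinAt.tendsto_nhdsWithin fun t ht => by simpa using ht
  refine hofReal.frequently ((eventually_nhdsWithin_of_eventually_nhds hnear).frequently.mono
    fun t ht => ?_)
  simpa only [← herglotz_add_smul, hW] using hw _ ht

lemma exists_subseq_tendsto_herglotzLine {ν : ℕ → sphere (0 : E) 1 → ℂ}
    (hν : ∀ n, Integrable (ν n) μ) (hL : ∀ n, ∫ α, ‖ν n α‖ ∂μ ≤ L) {x₀ v : E} {R : ℝ}
    (hR : 0 < R) {W : ℂ → ℂ} (hW : Differentiable ℂ W)
    (hlim : ∃ᶠ z in 𝓝[≠] (0 : ℂ), Tendsto (fun n => herglotzLine μ (ν n) x₀ v z) atTop (𝓝 (W z))) :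
    ∃ φ : ℕ → ℕ, StrictMono φ ∧
      ∀ z ∈ ball (0 : ℂ) R, Tendsto (fun n => herglotzLine μ (ν (φ n)) x₀ v z) atTop (𝓝 (W z)) := by
  have him : ∀ z ∈ closedBall (0 : ℂ) R, |z.im| ≤ R := fun z hz =>
    (abs_im_le_norm z).trans (mem_closedBall_zero_iff.1 hz)
  have hL0 : 0 ≤ L := (integral_nonneg fun _ => norm_nonneg _).trans (hL 0)
  refine exists_subseq_tendsto_of_frequently_tendsto (isCompact_closedBall 0 R) isOpen_ball
    (convex_ball 0 R).isPreconnected ball_subset_closedBall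
    (isCompact_closedBall 0 (L * Real.exp (R * ‖v‖)))
    (fun n => (differentiable_herglotzLine (hν n) x₀ v).differentiableOn)
    (fun n => (lipschitzOnWith_herglotzLine (hν n) (hL n) x₀ v R).mono him)
    (fun n z hz => mem_closedBall_zero_iff.2 <| (norm_herglotzLine_le (hν n) (hL n) x₀ v z).trans
      (by gcongr; exact him z hz))
    hW.differentiableOn (mem_ball_self hR) hlim

end Herglotz

section Coordinates

variable {ι : Type*} [Fintype ι]

lemma sum_ofReal_mul_ofReal_eq_inner (x y : EuclideanSpace ℝ ι) :
    ∑ k, ((x k : ℂ) * (y k : ℂ)) = ((⟪x, y⟫ : ℝ) : ℂ) := by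
  simp [PiLp.inner_apply, mul_comm]

def planeWaveLine (θ : ι → ℂ) (x₀ v : EuclideanSpace ℝ ι) (z : ℂ) : ℂ :=
  exp (I * (∑ k, θ k * x₀ k + z * ∑ k, θ k * v k))

lemma planeWaveLine_ofReal (θ : ι → ℂ) (x₀ v : EuclideanSpace ℝ ι) (t : ℝ) :
    planeWaveLine θ x₀ v t = exp (I * ∑ k, θ k * ((x₀ + t • v) k : ℂ)) := by
  simp [planeWaveLine, Finset.mul_sum, ← Finset.sum_add_distrib, mul_add, mul_left_comm]

lemma differentiable_planeWaveLine (θ : ι → ℂ) (x₀ v : EuclideanSpace ℝ ι) :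
    Differentiable ℂ (planeWaveLine θ x₀ v) := by
  unfold planeWaveLine; fun_prop

lemma tendsto_norm_planeWaveLine_neg_im_atTop {θ : ι → ℂ} (hθ : ∃ k, (θ k).im ≠ 0)
    (x₀ : EuclideanSpace ℝ ι) :
    Tendsto (fun t : ℝ => ‖planeWaveLine θ x₀ (WithLp.toLp 2 fun k => -(θ k).im) t‖)
      atTop atTop := by
  set v : EuclideanSpace ℝ ι := WithLp.toLp 2 fun k => -(θ k).im
  have hv : ∑ k, (θ k).im * v k < 0 := by
    obtain ⟨k, hk⟩ := hθ
    simp only [v, mul_neg, Finset.sum_neg_distrib, neg_lt_zero]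
    exact Finset.sum_pos' (fun i _ => mul_self_nonneg _) ⟨k, Finset.mem_univ k, mul_self_pos.2 hk⟩
  have hre : ∀ t : ℝ, (I * (∑ k, θ k * x₀ k + t * ∑ k, θ k * v k)).re
      = -(∑ k, θ k * x₀ k).im + t * -∑ k, (θ k).im * v k := fun t => by
    simp [im_sum]; ring
  simp only [planeWaveLine, norm_exp, hre]
  exact Real.tendsto_exp_atTop.comp <| tendsto_atTop_add_const_left _ _ <|
    tendsto_id.atTop_mul_const (neg_pos.2 hv)

end Coordinates

theorem herglotz_coefficients_blow_up_general
    (D : Set (EuclideanSpace ℝ (Fin 3)))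
    (hDo : IsOpen D) (hDne : D.Nonempty)
    (θ : Fin 3 → ℂ) (hIm : ∃ k, (θ k).im ≠ 0) :
    ∀ C : ℝ, 0 < C → ∃ ε : ℝ, 0 < ε ∧
      ∀ ν : Metric.sphere (0 : EuclideanSpace ℝ (Fin 3)) 1 → ℂ,
        MemLp ν 2 (volume : Measure (EuclideanSpace ℝ (Fin 3))).toSphere →
        eLpNorm (fun x : EuclideanSpace ℝ (Fin 3) =>
            Complex.exp (Complex.I * ∑ k, θ k * (x k : ℂ)) -
            ∫ α, ν α * Complex.exp (Complex.I *
                ∑ k, ((α : EuclideanSpace ℝ (Fin 3)) k : ℂ) * (x k : ℂ))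
              ∂(volume : Measure (EuclideanSpace ℝ (Fin 3))).toSphere)
          2 (volume.restrict D) ≤ ENNReal.ofReal ε →
        ENNReal.ofReal C ≤
          eLpNorm ν 2 (volume : Measure (EuclideanSpace ℝ (Fin 3))).toSphere := by
  intro C hC
  by_contra! hcon
  choose ν hν happrox hsmall using fun n : ℕ => hcon (1 / (n + 1)) Nat.one_div_pos_of_nat
  set μ := (volume : Measure (EuclideanSpace ℝ (Fin 3))).toSphere
  set L := C * μ.real univ ^ (1 / 2 : ℝ)
  have hint n : Integrable (ν n) μ := (hν n).integrable one_le_two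
  have hL n : ∫ α, ‖ν n α‖ ∂μ ≤ L :=
    integral_norm_le_of_eLpNorm_two_le (hν n).1 hC.le (hsmall n).le
  have hpt := tendsto_herglotz_of_tendsto_eLpNorm two_ne_zero hint hL
    (w := fun y => exp (I * ∑ k, θ k * (y k : ℂ))) (by fun_prop) hDo
    (tendsto_of_tendsto_of_tendsto_of_le_of_le tendsto_const_nhds
      (by simpa using ENNReal.tendsto_ofReal tendsto_one_div_add_atTop_nhds_zero_nat)
      (fun _ => bot_le) fun n => by
        simpa only [herglotz, sum_ofReal_mul_ofReal_eq_inner, one_div] using happrox n)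
  obtain ⟨x₀, hx₀⟩ := hDne
  set v : EuclideanSpace ℝ (Fin 3) := WithLp.toLp 2 fun k => -(θ k).im
  obtain ⟨t, hLt, ht⟩ :=
    (((tendsto_norm_planeWaveLine_neg_im_atTop hIm x₀).eventually_gt_atTop L).and
      (eventually_ge_atTop 0)).exists
  obtain ⟨φ, -, hφ⟩ := exists_subseq_tendsto_herglotzLine hint hL (R := t + 1) (by positivity)
    (differentiable_planeWaveLine θ x₀ v)
    (frequently_tendsto_herglotzLine hDo hpt hx₀ v (planeWaveLine_ofReal θ x₀ v))
  have hbound : ‖planeWaveLine θ x₀ v t‖ ≤ L :=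
    le_of_tendsto' (hφ t (by simp [abs_of_nonneg ht])).norm fun n =>
      norm_herglotzLine_ofReal_le (hint (φ n)) (hL (φ n)) x₀ v t
  exact hLt.not_ge hbound

/-- any superposition of plane waves `e^{iα·x}`, `α ∈ S²`, that
approximates the exponentially growing Helmholtz solution `e^{iθ·x}`
(`θ·θ = 1`, `Im θ ≠ 0`) in `L²(D)` to within `ε` must have `L²(S²)` norm
blowing up as `ε → 0`. -/
theorem herglotz_coefficients_blow_up
    (D : Set (EuclideanSpace ℝ (Fin 3)))
    (hDo : IsOpen D) (hDb : Bornology.IsBounded D) (hDne : D.Nonempty)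
    (θ : Fin 3 → ℂ) (hθ : (∑ k, θ k * θ k) = 1) (hIm : ∃ k, (θ k).im ≠ 0) :
    ∀ C : ℝ, 0 < C → ∃ ε : ℝ, 0 < ε ∧
      ∀ ν : Metric.sphere (0 : EuclideanSpace ℝ (Fin 3)) 1 → ℂ,
        MemLp ν 2 (volume : Measure (EuclideanSpace ℝ (Fin 3))).toSphere →
        eLpNorm (fun x : EuclideanSpace ℝ (Fin 3) =>
            Complex.exp (Complex.I * ∑ k, θ k * (x k : ℂ)) -
            ∫ α, ν α * Complex.exp (Complex.I *
                ∑ k, ((α : EuclideanSpace ℝ (Fin 3)) k : ℂ) * (x k : ℂ))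
              ∂(volume : Measure (EuclideanSpace ℝ (Fin 3))).toSphere)
          2 (volume.restrict D) ≤ ENNReal.ofReal ε →
        ENNReal.ofReal C ≤
          eLpNorm ν 2 (volume : Measure (EuclideanSpace ℝ (Fin 3))).toSphere :=
  herglotz_coefficients_blow_up_general D hDo hDne θ hIm
end
end

section
/- Let n ≥ 1, let a > 0, let B_a = {x ∈ ℝⁿ : |x| ≤ a}, and let f ∈ L²(ℝⁿ, ℂ) vanish almost everywhere outside B_a. Define the Fourier transform f̃(ξ) = ∫_{B_a} f(x) e^{i ξ · x} dx for ξ ∈ ℝⁿ. If f̃ vanishes on some nonempty open subset D̃ ⊂ ℝⁿ, then f = 0 almost everywhere. -/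
/-!
The Fourier transform of an integrable `g` vanishing outside a bounded set is real-analytic along
every line `t ↦ ξ + t • v`: it is the restriction to `ℝ` of the entire function
`z ↦ ∫ exp (-2πi (⟪x, ξ⟫ + z ⟪x, v⟫)) g x dx`. If it vanishes on a nonempty open set, the identity
theorem on the lines through a point of that set makes it vanish everywhere. Finally an integrable
function with vanishing Fourier transform is zero a.e., since `∫ 𝓕ψ • g = ∫ ψ • 𝓕g` for every
Schwartz function `ψ`, and the `𝓕ψ` include all real test functions.
-/

open MeasureTheory Complex Filter
open scoped FourierTransform RealInnerProductSpace Real SchwartzMap Topology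

theorem differentiable_integral_cexp_mul_smul {α E : Type*} [MeasurableSpace α] {μ : Measure α}
    [NormedAddCommGroup E] [NormedSpace ℂ E] {f : α → E} (hf : Integrable f μ) {T : α → ℂ}
    (hT : AEStronglyMeasurable T μ) {M : ℝ} (hTM : ∀ᵐ x ∂μ, ‖T x‖ ≤ M) :
    Differentiable ℂ fun z : ℂ => ∫ x, cexp (z * T x) • f x ∂μ := by
  intro z₀
  set K := Real.exp ((‖z₀‖ + 1) * M)
  have hexp_le : ∀ z ∈ Metric.ball z₀ 1, ∀ x, ‖T x‖ ≤ M → ‖cexp (z * T x)‖ ≤ K := by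
    intro z hz x hx
    have hz' : ‖z‖ ≤ ‖z₀‖ + 1 := by
      have := norm_le_norm_add_norm_sub' z z₀
      rw [Metric.mem_ball, dist_eq_norm] at hz
      linarith
    calc ‖cexp (z * T x)‖ ≤ Real.exp (‖z‖ * ‖T x‖) := by
          simpa only [norm_mul] using norm_exp_le_exp_norm (z * T x)
      _ ≤ K := Real.exp_le_exp.2 <|
          mul_le_mul hz' hx (norm_nonneg _) (by linarith [norm_nonneg z₀])
  have hmeas : ∀ z : ℂ, AEStronglyMeasurable (fun x => cexp (z * T x) • f x) μ := fun z =>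
    (continuous_exp.comp_aestronglyMeasurable (hT.const_mul z)).smul hf.1
  refine (hasDerivAt_integral_of_dominated_loc_of_deriv_le (Metric.ball_mem_nhds z₀ one_pos)
    (F' := fun z x => T x • cexp (z * T x) • f x) (bound := fun x => M * K * ‖f x‖)
    (Eventually.of_forall hmeas) ?_ (hT.smul (hmeas z₀)) ?_ (hf.norm.const_mul _) ?_
    ).2.differentiableAt
  · refine hf.norm.const_mul K |>.mono' (hmeas z₀) ?_
    filter_upwards [hTM] with x hx
    rw [norm_smul]
    gcongr
    exact hexp_le z₀ (Metric.mem_ball_self one_pos) x hx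
  · filter_upwards [hTM] with x hx z hz
    rw [norm_smul, norm_smul, ← mul_assoc]
    have := (norm_nonneg _).trans hx
    gcongr
    exact hexp_le z hz x hx
  · filter_upwards with x z _
    simpa [smul_smul, mul_comm] using
      (((hasDerivAt_id z).mul_const (T x)).cexp).smul_const (f x)

theorem eq_zero_of_analyticOnNhd_comp_line {V E : Type*} [NormedAddCommGroup V]
    [NormedSpace ℝ V] [NormedAddCommGroup E] [NormedSpace ℝ E] {h : V → E}
    (hline : ∀ ξ v : V, AnalyticOnNhd ℝ (fun t : ℝ => h (ξ + t • v)) Set.univ)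
    {U : Set V} (hU : IsOpen U) (hUne : U.Nonempty) (h0 : Set.EqOn h 0 U) : h = 0 := by
  obtain ⟨ξ, hξ⟩ := hUne
  funext η
  have hnear : (fun t : ℝ => h (ξ + t • (η - ξ))) =ᶠ[𝓝 0] 0 := by
    have hcont : Continuous fun t : ℝ => ξ + t • (η - ξ) := by fun_prop
    filter_upwards [hcont.continuousAt.preimage_mem_nhds (by simpa using hU.mem_nhds hξ)]
      with t ht using h0 ht
  simpa using (hline ξ (η - ξ)).eqOn_zero_of_preconnected_of_eventuallyEq_zero
    isPreconnected_univ (Set.mem_univ 0) hnear (Set.mem_univ 1)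

section Fourier

variable {V E : Type*} [NormedAddCommGroup V] [InnerProductSpace ℝ V] [FiniteDimensional ℝ V]
  [MeasurableSpace V] [BorelSpace V] [NormedAddCommGroup E] [NormedSpace ℂ E]

theorem analyticOnNhd_fourier_comp_line [CompleteSpace E] {g : V → E} (hg : Integrable g)
    {s : Set V} (hs : Bornology.IsBounded s) (hgs : ∀ᵐ x, x ∉ s → g x = 0) (ξ v : V) :
    AnalyticOnNhd ℝ (fun t : ℝ => 𝓕 g (ξ + t • v)) Set.univ := by
  obtain ⟨R, hR⟩ := hs.subset_closedBall 0
  set B := Metric.closedBall (0 : V) R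
  let T : V → ℂ := fun x => ↑(-2 * π * ⟪x, v⟫) * I
  let G : ℂ → E := fun z => ∫ x in B, cexp (z * T x) • 𝐞 (-⟪x, ξ⟫) • g x
  have hT : Continuous T := by fun_prop
  have hTB : ∀ᵐ x ∂volume.restrict B, ‖T x‖ ≤ 2 * π * (R * ‖v‖) := by
    refine (ae_restrict_iff' measurableSet_closedBall).2 (Eventually.of_forall fun x hx => ?_)
    have hx : ‖x‖ ≤ R := mem_closedBall_zero_iff.1 hx
    simp only [T, norm_mul, norm_I, mul_one, norm_real, norm_neg, Real.norm_eq_abs, abs_two,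
      abs_of_pos Real.pi_pos]
    gcongr
    exact (abs_real_inner_le_norm x v).trans (by gcongr)
  have hG : Differentiable ℂ G :=
    differentiable_integral_cexp_mul_smul
      ((Real.fourierIntegral_convergent_iff ξ).2 hg).integrableOn hT.aestronglyMeasurable hTB
  have hline : ∀ t : ℝ, 𝓕 g (ξ + t • v) = G t := by
    intro t
    rw [Real.fourier_eq, ← setIntegral_eq_integral_of_ae_compl_eq_zero]
    · refine integral_congr_ae (Eventually.of_forall fun x => ?_)
      simp only [T, Circle.smul_def, Real.fourierChar_apply, smul_smul, ← Complex.exp_add,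
        inner_add_right, inner_smul_right]
      congr 2
      push_cast
      ring
    · filter_upwards [hgs] with x hx hxB
      rw [hx fun hxs => hxB (hR hxs), smul_zero]
  intro t _
  rw [funext hline]
  exact (hG.analyticAt _).restrictScalars.comp (ofRealCLM.analyticAt _)

theorem MeasureTheory.Integrable.ae_eq_zero_of_fourier_eq_zero_s15 [CompleteSpace E] {g : V → E}
    (hg : Integrable g) (h : 𝓕 g = 0) : g =ᵐ[volume] 0 := by
  refine ae_eq_zero_of_integral_contDiff_smul_eq_zero hg.locallyIntegrable fun φ hφ hφc => ?_
  let φ' : 𝓢(V, ℂ) := (hφc.comp_left (g := ofRealCLM) (map_zero _)).toSchwartzMap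
    (ofRealCLM.contDiff.comp hφ)
  let ψ : 𝓢(V, ℂ) := 𝓕⁻ φ'
  calc ∫ x, φ x • g x = ∫ x, 𝓕 (ψ : V → ℂ) x • g x := by
        rw [← SchwartzMap.fourier_coe, FourierTransform.fourier_fourierInv_eq]
        simp [φ', ← Complex.coe_smul]
    _ = ∫ ξ, ψ ξ • 𝓕 g ξ := by
        have := VectorFourier.integral_fourierIntegral_smul_eq_flip (L := innerₗ V)
          Real.continuous_fourierChar continuous_inner (ψ.integrable (μ := volume)) hg
        rwa [flip_innerₗ] at this
    _ = 0 := by simp [h]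

end Fourier

theorem integral_mul_cexp_sum_eq_fourier {n : ℕ} (f : EuclideanSpace ℝ (Fin n) → ℂ)
    (ξ : EuclideanSpace ℝ (Fin n)) :
    ∫ x, f x * cexp (I * (∑ k, ξ k * x k : ℝ)) = 𝓕 f ((-(2 * π)⁻¹) • ξ) := by
  rw [Real.fourier_eq]
  refine integral_congr_ae (Eventually.of_forall fun x => ?_)
  have hsum : ∑ k, ξ k * x k = ⟪x, ξ⟫ := by simp [PiLp.inner_apply]
  dsimp only
  rw [Circle.smul_def, Real.fourierChar_apply, smul_eq_mul, mul_comm, hsum, inner_smul_right]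
  congr 2
  push_cast
  field_simp

theorem fourier_transform_compact_support_uniqueness_general
    (n : ℕ) (a : ℝ)
    (f : EuclideanSpace ℝ (Fin n) → ℂ)
    (hf : MemLp f 2 (volume : Measure (EuclideanSpace ℝ (Fin n))))
    (hsupp : ∀ᵐ x : EuclideanSpace ℝ (Fin n),
      x ∉ Metric.closedBall (0 : EuclideanSpace ℝ (Fin n)) a → f x = 0)
    (Dt : Set (EuclideanSpace ℝ (Fin n))) (hDt : IsOpen Dt) (hDtne : Dt.Nonempty)
    (hvanish : ∀ ξ ∈ Dt,
      ∫ x in Metric.closedBall (0 : EuclideanSpace ℝ (Fin n)) a,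
        f x * Complex.exp (Complex.I * (∑ k, ξ k * x k : ℝ)) = 0) :
    f =ᵐ[volume] 0 := by
  have hfint : Integrable f :=
    ((hf.locallyIntegrable one_le_two).integrableOn_isCompact
      (isCompact_closedBall 0 a)).integrable_of_ae_notMem_eq_zero hsupp
  have hfourier : Set.EqOn (𝓕 f) 0 ((fun ξ => (-(2 * π)⁻¹) • ξ) '' Dt) := by
    rintro _ ⟨ξ, hξ, rfl⟩
    rw [Pi.zero_apply, ← integral_mul_cexp_sum_eq_fourier, ← hvanish ξ hξ]
    exact (setIntegral_eq_integral_of_ae_compl_eq_zero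
      (hsupp.mono fun x hx hxB => by rw [hx hxB, zero_mul])).symm
  exact hfint.ae_eq_zero_of_fourier_eq_zero_s15
    (eq_zero_of_analyticOnNhd_comp_line (analyticOnNhd_fourier_comp_line hfint
      Metric.isBounded_closedBall hsupp) (isOpenMap_smul₀ (by simp [Real.pi_ne_zero]) Dt hDt)
      (hDtne.image _) hfourier)

/-- uniqueness of recovery of a compactly supported `L²` function
from its Fourier transform on an open set: if `f ∈ L²` vanishes a.e. outside
the ball `B_a` and `f̃(ξ) = ∫_{B_a} f(x) e^{iξ·x} dx` vanishes on a nonempty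
open set `D̃ ⊂ ℝⁿ`, then `f = 0` a.e. -/
theorem fourier_transform_compact_support_uniqueness
    (n : ℕ) (hn : 1 ≤ n) (a : ℝ) (ha : 0 < a)
    (f : EuclideanSpace ℝ (Fin n) → ℂ)
    (hf : MemLp f 2 (volume : Measure (EuclideanSpace ℝ (Fin n))))
    (hsupp : ∀ᵐ x : EuclideanSpace ℝ (Fin n),
      x ∉ Metric.closedBall (0 : EuclideanSpace ℝ (Fin n)) a → f x = 0)
    (Dt : Set (EuclideanSpace ℝ (Fin n))) (hDt : IsOpen Dt) (hDtne : Dt.Nonempty)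
    (hvanish : ∀ ξ ∈ Dt,
      ∫ x in Metric.closedBall (0 : EuclideanSpace ℝ (Fin n)) a,
        f x * Complex.exp (Complex.I * (∑ k, ξ k * x k : ℝ)) = 0) :
    f =ᵐ[volume] 0 :=
  fourier_transform_compact_support_uniqueness_general n a f hf hsupp Dt hDt hDtne hvanish
end

section
/- Let n ≥ 1, 0 < a < a₁, and let h̃ : ℝⁿ → ℂ be a smooth compactly supported function with (2π)^{−n} ∫_{ℝⁿ} h̃(ξ) dξ = 1. For j = 1, 2, 3, … define δ_j(x) = (j/(4π a₁²))^{n/2} (1 − |x|²/(4 a₁²))^j · ((𝓕^{−1} h̃)(x)), where (𝓕^{−1} h̃)(x) = (2π)^{−n} ∫_{ℝⁿ} h̃(ξ) e^{−i ξ · x} dξ. Then there exists a constant c > 0, depending only on n, a, a₁ and h̃, such that for every m₁ > 0 and every continuously differentiable f : ℝⁿ → ℂ vanishing outside the closed ball B_a = {x : |x| ≤ a} and satisfying sup_x |f(x)| + sup_x |∇f(x)| ≤ m₁, one has sup_{x ∈ B_a} |f(x) − ∫_{B_a} f(y) δ_j(x − y) dy| ≤ c m₁ j^{−1/2} for all j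 ≥ 1. -/
open MeasureTheory

open Real



/-- `u² ≤ e^u` for `u ≥ 0`. -/
lemma aux_sq_le_exp {u : ℝ} (hu : 0 ≤ u) : u ^ 2 ≤ Real.exp u := by
  have h1 : 1 + u / 4 ≤ Real.exp (u / 4) := by
    have := Real.add_one_le_exp (u / 4); linarith
  have h2 : (0:ℝ) ≤ 1 + u / 4 := by linarith
  have h3 : Real.exp u = (Real.exp (u / 4)) ^ 4 := by
    rw [← Real.exp_nat_mul]; norm_num; ring_nf
  rw [h3]
  calc u ^ 2 ≤ (1 + u / 4) ^ 4 := by nlinarith [sq_nonneg (1 - u/4), sq_nonneg u]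
    _ ≤ (Real.exp (u / 4)) ^ 4 := by
        apply pow_le_pow_left₀ h2 h1 4

/-- `s·e^{-s²/2} ≤ 1` for `s ≥ 0`. -/
lemma aux_mul_exp_le_one {s : ℝ} (hs : 0 ≤ s) : s * Real.exp (-(s ^ 2 / 2)) ≤ 1 := by
  have h1 : s ≤ Real.exp (s ^ 2 / 2) := by
    have := Real.add_one_le_exp (s ^ 2 / 2); nlinarith [sq_nonneg (s - 1)]
  have h2 : Real.exp (-(s ^ 2 / 2)) = (Real.exp (s ^ 2 / 2))⁻¹ := by
    rw [Real.exp_neg]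
  rw [h2]
  have h3 : (0:ℝ) < Real.exp (s ^ 2 / 2) := Real.exp_pos _
  rw [← div_eq_mul_inv, div_le_one h3]; exact h1

/-- `e^{-t} - (1-t) ≤ t²` for `t ≥ 0`. -/
lemma aux_exp_neg_sub_le {t : ℝ} (ht : 0 ≤ t) : Real.exp (-t) - (1 - t) ≤ t ^ 2 := by
  have h1 : 1 + t ≤ Real.exp t := by have := Real.add_one_le_exp t; linarith
  have h2 : Real.exp (-t) ≤ (1 + t)⁻¹ := by
    rw [Real.exp_neg]
    exact inv_anti₀ (by linarith) h1
  have h4 : (0:ℝ) < 1 + t := by linarith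
  have h3 : (1 + t)⁻¹ - (1 - t) ≤ t ^ 2 := by
    have h5 : (1 + t)⁻¹ * (1 + t) = 1 := inv_mul_cancel₀ h4.ne'
    nlinarith [inv_nonneg.mpr h4.le]
  linarith

/-- Bernoulli-type bound: for `0 ≤ b ≤ a`, `a^(k+1) - b^(k+1) ≤ (k+1)·a^k·(a-b)`. -/
lemma aux_pow_sub_pow (k : ℕ) {a b : ℝ} (hb : 0 ≤ b) (hba : b ≤ a) (ha : 0 < a) :
    a ^ (k+1) - b ^ (k+1) ≤ ((k:ℝ)+1) * a ^ k * (a - b) := by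
  have hx : -2 ≤ b / a - 1 := by
    have : 0 ≤ b / a := div_nonneg hb ha.le
    linarith
  have hber := one_add_mul_le_pow hx (k+1)
  rw [add_sub_cancel, div_pow] at hber
  have hAj : (0:ℝ) < a ^ (k+1) := pow_pos ha (k+1)
  have key := mul_le_mul_of_nonneg_right hber hAj.le
  have h5 : b ^ (k+1) / a ^ (k+1) * a ^ (k+1) = b ^ (k+1) := by field_simp
  rw [h5] at key
  have expand : (1 + ((k:ℝ)+1) * (b / a - 1)) * a ^ (k+1)
      = a ^ (k+1) + ((k:ℝ)+1) * a ^ k * (b - a) := by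
    have : a ^ (k+1) = a ^ k * a := pow_succ a k
    field_simp
    ring
  push_cast at key
  rw [expand] at key
  linarith

/-- Main pointwise kernel estimate:
`e^{-jt} - (1-t)^j ≤ (48/j)·e^{-jt/4}` for `1 ≤ j`, `0 ≤ t ≤ 1`. -/
lemma aux_key_pow (j : ℕ) (hj : 1 ≤ j) {t : ℝ} (h0 : 0 ≤ t) (h1 : t ≤ 1) :
    Real.exp (-((j : ℝ) * t)) - (1 - t) ^ j ≤ 48 / (j : ℝ) * Real.exp (-((j : ℝ) * t) / 4) := by
  obtain ⟨k, rfl⟩ : ∃ k, j = k + 1 := ⟨j - 1, by omega⟩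
  set j := k + 1
  have hjR : (1:ℝ) ≤ (j : ℝ) := by exact_mod_cast hj
  have hjpos : (0:ℝ) < j := by linarith
  set A : ℝ := Real.exp (-t) with hA
  have hApos : 0 < A := Real.exp_pos _
  have hBA : 1 - t ≤ A := by have := Real.add_one_le_exp (-t); linarith
  have hB0 : 0 ≤ 1 - t := by linarith
  have hAle1 : A ≤ 1 := by
    rw [hA]; exact Real.exp_le_one_iff.mpr (by linarith)
  have bern : A ^ j - (1 - t) ^ j ≤ (j:ℝ) * A ^ k * (A - (1 - t)) := by
    have := aux_pow_sub_pow k hB0 hBA hApos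
    push_cast
    convert this using 3 <;> push_cast [j] <;> ring
  have hdiff : A - (1 - t) ≤ t ^ 2 := aux_exp_neg_sub_le h0
  -- A^k = A^j * e^t ≤ 3 * A^j  (since t ≤ 1, e ≤ 3)
  have hAk : A ^ k ≤ 3 * A ^ j := by
    have h6 : A ^ j = A ^ k * A := pow_succ A k
    have h7 : A ^ k * 1 ≤ A ^ k * (3 * A) := by
      apply mul_le_mul_of_nonneg_left _ (pow_nonneg hApos.le k)
      -- 1 ≤ 3 * e^{-t} since e^t ≤ e ≤ 3
      have h8 : Real.exp t ≤ Real.exp 1 := Real.exp_le_exp.mpr h1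
      have h9 : Real.exp 1 ≤ 3 := by
        have := Real.exp_one_lt_d9; linarith
      have h10 : Real.exp t * A = 1 := by
        rw [hA, ← Real.exp_add]; simp
      nlinarith
    rw [h6]; nlinarith [pow_nonneg hApos.le k]
  -- so far: e^{-jt} - (1-t)^j ≤ 3 j t² A^j
  have step1 : Real.exp (-((j : ℝ) * t)) - (1 - t) ^ j ≤ 3 * (j:ℝ) * t ^ 2 * A ^ j := by
    have hAj : Real.exp (-((j : ℝ) * t)) = A ^ j := by
      rw [hA, ← Real.exp_nat_mul]; congr 1; ring
    rw [hAj]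
    have e1 : (j:ℝ) * A ^ k * (A - (1 - t)) ≤ (j:ℝ) * A ^ k * t ^ 2 :=
      mul_le_mul_of_nonneg_left hdiff (by positivity)
    have e2 : (j:ℝ) * A ^ k * t ^ 2 ≤ (j:ℝ) * (3 * A ^ j) * t ^ 2 := by
      apply mul_le_mul_of_nonneg_right _ (sq_nonneg t)
      exact mul_le_mul_of_nonneg_left hAk (by positivity)
    nlinarith [bern]
  -- now: 3 j t² A^j = 3 j t² e^{-jt} ≤ 48/j e^{-jt/4}
  have step2 : 3 * (j:ℝ) * t ^ 2 * A ^ j ≤ 48 / (j : ℝ) * Real.exp (-((j : ℝ) * t) / 4) := by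
    have hAj : A ^ j = Real.exp (-((j : ℝ) * t)) := by
      rw [hA, ← Real.exp_nat_mul]; congr 1; ring
    rw [hAj]
    -- t² e^{-jt/2} ≤ 16/j²  via u² ≤ e^u with u = jt/4 : (jt/4)² ≤ e^{jt/4}
    have hu : ((j:ℝ) * t / 4) ^ 2 ≤ Real.exp ((j:ℝ) * t / 4) := aux_sq_le_exp (by positivity)
    -- e^{-jt} = e^{-jt/4} * e^{-3jt/4} and e^{-3jt/4} ≤ e^{-jt/2} ≤ (16/(j²t²)) e^{-jt/4}... 
    -- Use: t² ≤ (16/j²) e^{jt/4}  hence  t² e^{-jt} ≤ (16/j²) e^{-3jt/4} ≤ (16/j²) e^{-jt/4}.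
    have ht2 : t ^ 2 ≤ 16 / (j:ℝ)^2 * Real.exp ((j:ℝ) * t / 4) := by
      have hj2 : (0:ℝ) < (j:ℝ)^2 := by positivity
      rw [div_mul_eq_mul_div, le_div_iff₀ hj2]
      calc t ^ 2 * (j:ℝ)^2 = 16 * (((j:ℝ) * t / 4) ^ 2) := by ring
        _ ≤ 16 * Real.exp ((j:ℝ) * t / 4) := by linarith
        _ = 16 * Real.exp ((j:ℝ) * t / 4) := rfl
    calc 3 * (j:ℝ) * t ^ 2 * Real.exp (-((j:ℝ) * t))
        ≤ 3 * (j:ℝ) * (16 / (j:ℝ)^2 * Real.exp ((j:ℝ) * t / 4)) * Real.exp (-((j:ℝ) * t)) := by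
          apply mul_le_mul_of_nonneg_right _ (Real.exp_pos _).le
          exact mul_le_mul_of_nonneg_left ht2 (by positivity)
      _ = 48 / (j:ℝ) * (Real.exp ((j:ℝ) * t / 4) * Real.exp (-((j:ℝ) * t))) := by
          field_simp; ring
      _ ≤ 48 / (j:ℝ) * Real.exp (-((j : ℝ) * t) / 4) := by
          apply mul_le_mul_of_nonneg_left _ (by positivity)
          rw [← Real.exp_add]
          apply Real.exp_le_exp.mpr
          nlinarith
  linarith

/-- Gaussian integrability on Euclidean space. -/
lemma aux_gauss_integrable (n : ℕ) {c : ℝ} (hc : 0 < c) :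
    Integrable (fun z : EuclideanSpace ℝ (Fin n) => Real.exp (-(c * ‖z‖ ^ 2))) := by
  have h := (GaussianFourier.integrable_cexp_neg_mul_sq_norm_add
    (V := EuclideanSpace ℝ (Fin n)) (b := (c:ℂ)) (by simpa using hc) 0 0).norm
  convert h using 2 with z
  simp [Complex.norm_exp]
  norm_num
  left
  norm_cast

/-- Gaussian integral value on Euclidean space. -/
lemma aux_gauss_value (n : ℕ) {c : ℝ} (hc : 0 < c) :
    ∫ z : EuclideanSpace ℝ (Fin n), Real.exp (-(c * ‖z‖ ^ 2))
      = (Real.pi / c) ^ ((n:ℝ) / 2) := by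
  have h := GaussianFourier.integral_rexp_neg_mul_sq_norm
    (V := EuclideanSpace ℝ (Fin n)) hc
  simp only [neg_mul] at h
  rw [show ((Module.finrank ℝ (EuclideanSpace ℝ (Fin n)) : ℝ) / 2) = ((n:ℝ)/2) by
    simp] at h
  exact h

/-- `‖e^{-iθ} - e^{-iθ'}‖ ≤ |θ - θ'|`. -/
lemma aux_exp_I_sub (θ θ' : ℝ) :
    ‖Complex.exp (-Complex.I * θ) - Complex.exp (-Complex.I * θ')‖ ≤ |θ - θ'| := by
  have key : ∀ ψ : ℝ, ‖Complex.exp (-Complex.I * ψ) - 1‖ ≤ |ψ| := by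
    intro ψ
    have h1 : Complex.exp (-Complex.I * ψ) = Complex.cos (-ψ) + Complex.sin (-ψ) * Complex.I := by
      rw [← Complex.exp_mul_I]; congr 1; push_cast; ring
    rw [h1]
    have h2 : Complex.cos (-ψ:ℝ) = (Real.cos (-ψ) : ℂ) := by
      rw [Complex.ofReal_cos]
    have h3 : Complex.sin (-ψ:ℝ) = (Real.sin (-ψ) : ℂ) := by
      rw [Complex.ofReal_sin]
    rw [show ((-ψ : ℝ) : ℂ) = -(ψ:ℂ) by push_cast; ring] at h2 h3
    rw [h2, h3]
    have h4 : ‖(Real.cos (-ψ) : ℂ) + (Real.sin (-ψ) : ℂ) * Complex.I - 1‖ ^ 2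
        = (Real.cos (-ψ) - 1)^2 + (Real.sin (-ψ))^2 := by
      rw [show (Real.cos (-ψ) : ℂ) + (Real.sin (-ψ) : ℂ) * Complex.I - 1
          = Complex.mk (Real.cos (-ψ) - 1) (Real.sin (-ψ)) by
        apply Complex.ext <;>
          simp [Complex.cos_ofReal_re, Complex.sin_ofReal_re]]
      rw [Complex.sq_norm, Complex.normSq_mk]
      ring
    have h5 : (Real.cos (-ψ) - 1)^2 + (Real.sin (-ψ))^2 ≤ ψ^2 := by
      have hc : Real.cos (-ψ)^2 + Real.sin (-ψ)^2 = 1 := by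
        rw [add_comm]; exact Real.sin_sq_add_cos_sq (-ψ)
      have hb : 1 - (-ψ)^2/2 ≤ Real.cos (-ψ) := Real.one_sub_sq_div_two_le_cos
      nlinarith [Real.cos_le_one (-ψ)]
    have h6 : ‖(Real.cos (-ψ) : ℂ) + (Real.sin (-ψ) : ℂ) * Complex.I - 1‖ ^2 ≤ ψ^2 := by
      rw [h4]; exact h5
    calc ‖(Real.cos (-ψ) : ℂ) + (Real.sin (-ψ) : ℂ) * Complex.I - 1‖
        = |‖(Real.cos (-ψ) : ℂ) + (Real.sin (-ψ) : ℂ) * Complex.I - 1‖| := (abs_of_nonneg (norm_nonneg _)).symm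
      _ ≤ |ψ| := by
          rw [← Real.sqrt_sq_eq_abs, ← Real.sqrt_sq_eq_abs]
          exact Real.sqrt_le_sqrt h6
  have factor : Complex.exp (-Complex.I * θ) - Complex.exp (-Complex.I * θ')
      = Complex.exp (-Complex.I * θ') * (Complex.exp (-Complex.I * (θ - θ')) - 1) := by
    rw [mul_sub, ← Complex.exp_add, mul_one]
    congr 2
    push_cast; ring
  rw [factor, norm_mul]
  have habs : ‖Complex.exp (-Complex.I * θ')‖ = 1 := by
    rw [Complex.norm_exp]
    simp
  rw [habs, one_mul]
  have := key (θ - θ')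
  rw [Complex.ofReal_sub] at this
  exact this

/-- One-sided moment bound: `r·e^{-cr²} ≤ (1/√c)·e^{-cr²/2}`. -/
lemma aux_mom1 {c r : ℝ} (hc : 0 < c) (hr : 0 ≤ r) :
    r * Real.exp (-(c * r ^ 2)) ≤ (1 / Real.sqrt c) * Real.exp (-(c * r ^ 2 / 2)) := by
  have hsc : 0 < Real.sqrt c := Real.sqrt_pos.mpr hc
  have hs := aux_mul_exp_le_one (s := Real.sqrt c * r) (by positivity)
  have hsq : (Real.sqrt c * r) ^ 2 = c * r ^ 2 := by
    rw [mul_pow, Real.sq_sqrt hc.le]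
  rw [hsq] at hs
  have hre : r * Real.exp (-(c * r ^ 2 / 2)) ≤ 1 / Real.sqrt c := by
    rw [le_div_iff₀ hsc]
    calc r * Real.exp (-(c * r ^ 2 / 2)) * Real.sqrt c
        = Real.sqrt c * r * Real.exp (-(c * r ^ 2 / 2)) := by ring
      _ ≤ 1 := hs
  have hsplit : Real.exp (-(c * r ^ 2)) = Real.exp (-(c * r ^ 2 / 2)) * Real.exp (-(c * r ^ 2 / 2)) := by
    rw [← Real.exp_add]; congr 1; ring
  calc r * Real.exp (-(c * r ^ 2))
      = (r * Real.exp (-(c * r ^ 2 / 2))) * Real.exp (-(c * r ^ 2 / 2)) := by rw [hsplit]; ring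
    _ ≤ (1 / Real.sqrt c) * Real.exp (-(c * r ^ 2 / 2)) :=
        mul_le_mul_of_nonneg_right hre (Real.exp_pos _).le

noncomputable def gFun (n : ℕ) (ht : EuclideanSpace ℝ (Fin n) → ℂ)
    (z : EuclideanSpace ℝ (Fin n)) : ℂ :=
  (((2 * Real.pi) ^ n)⁻¹ : ℝ) •
    ∫ ξ : EuclideanSpace ℝ (Fin n), ht ξ * Complex.exp (-Complex.I * (∑ k, ξ k * z k : ℝ))

variable {n : ℕ} {ht : EuclideanSpace ℝ (Fin n) → ℂ}

lemma aux_phase_cont (z : EuclideanSpace ℝ (Fin n)) :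
    Continuous fun ξ : EuclideanSpace ℝ (Fin n) =>
      Complex.exp (-Complex.I * (∑ k, ξ k * z k : ℝ)) := by
  apply Complex.continuous_exp.comp
  apply Continuous.mul continuous_const
  apply Complex.continuous_ofReal.comp
  exact continuous_finset_sum _ fun k _ =>
    ((EuclideanSpace.proj k).continuous.mul continuous_const)

lemma aux_integrand_integrable (htcont : Continuous ht) (htc : HasCompactSupport ht)
    (z : EuclideanSpace ℝ (Fin n)) :
    Integrable (fun ξ : EuclideanSpace ℝ (Fin n) =>
      ht ξ * Complex.exp (-Complex.I * (∑ k, ξ k * z k : ℝ))) := by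
  apply Continuous.integrable_of_hasCompactSupport
  · exact htcont.mul (aux_phase_cont z)
  · exact htc.mul_right

lemma aux_norm_phase (z : EuclideanSpace ℝ (Fin n)) (ξ : EuclideanSpace ℝ (Fin n)) :
    ‖Complex.exp (-Complex.I * (∑ k, ξ k * z k : ℝ))‖ = 1 := by
  rw [Complex.norm_exp]
  simp

/-- uniform bound on `gFun`. -/
lemma gFun_bound (htcont : Continuous ht) (htc : HasCompactSupport ht)
    (z : EuclideanSpace ℝ (Fin n)) :
    ‖gFun n ht z‖ ≤ ((2 * Real.pi) ^ n)⁻¹ * ∫ ξ : EuclideanSpace ℝ (Fin n), ‖ht ξ‖ := by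
  have hpi : (0:ℝ) < (2 * Real.pi) ^ n := by positivity
  rw [gFun, norm_smul, Real.norm_eq_abs, abs_of_nonneg (by positivity)]
  apply mul_le_mul_of_nonneg_left _ (by positivity)
  calc ‖∫ ξ : EuclideanSpace ℝ (Fin n), ht ξ * Complex.exp (-Complex.I * (∑ k, ξ k * z k : ℝ))‖
      ≤ ∫ ξ : EuclideanSpace ℝ (Fin n), ‖ht ξ * Complex.exp (-Complex.I * (∑ k, ξ k * z k : ℝ))‖ :=
        norm_integral_le_integral_norm _
    _ = ∫ ξ : EuclideanSpace ℝ (Fin n), ‖ht ξ‖ := by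
        congr 1; funext ξ; rw [norm_mul, aux_norm_phase, mul_one]

/-- Lipschitz estimate on `gFun`. -/
lemma gFun_lip (htcont : Continuous ht) (htc : HasCompactSupport ht)
    (z w : EuclideanSpace ℝ (Fin n)) :
    ‖gFun n ht z - gFun n ht w‖ ≤
      (((2 * Real.pi) ^ n)⁻¹ * ∫ ξ : EuclideanSpace ℝ (Fin n), ‖ht ξ‖ * ‖ξ‖) * ‖z - w‖ := by
  have hpi : (0:ℝ) < ((2 * Real.pi) ^ n)⁻¹ := by positivity
  have hint1 := aux_integrand_integrable htcont htc z
  have hint2 := aux_integrand_integrable htcont htc w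
  rw [gFun, gFun, ← smul_sub, ← integral_sub hint1 hint2]
  rw [norm_smul, Real.norm_eq_abs, abs_of_nonneg hpi.le]
  rw [mul_assoc, mul_le_mul_iff_right₀ hpi]
  calc ‖∫ ξ : EuclideanSpace ℝ (Fin n),
        (ht ξ * Complex.exp (-Complex.I * (∑ k, ξ k * z k : ℝ)) -
         ht ξ * Complex.exp (-Complex.I * (∑ k, ξ k * w k : ℝ)))‖
      ≤ ∫ ξ : EuclideanSpace ℝ (Fin n),
          ‖ht ξ * Complex.exp (-Complex.I * (∑ k, ξ k * z k : ℝ)) -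
           ht ξ * Complex.exp (-Complex.I * (∑ k, ξ k * w k : ℝ))‖ :=
        norm_integral_le_integral_norm _
    _ ≤ ∫ ξ : EuclideanSpace ℝ (Fin n), (‖ht ξ‖ * ‖ξ‖) * ‖z - w‖ := by
        apply integral_mono_of_nonneg
        · filter_upwards with ξ; positivity
        · apply Integrable.mul_const
          apply Continuous.integrable_of_hasCompactSupport
          · exact (htcont.norm.mul continuous_norm)
          · apply HasCompactSupport.mul_right
            exact htc.norm
        · filter_upwards with ξ
          rw [← mul_sub, norm_mul]
          have h1 : ‖Complex.exp (-Complex.I * (∑ k, ξ k * z k : ℝ)) -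
              Complex.exp (-Complex.I * (∑ k, ξ k * w k : ℝ))‖
              ≤ |(∑ k, ξ k * z k) - (∑ k, ξ k * w k)| := aux_exp_I_sub _ _
          have h2 : (∑ k, ξ k * z k) - (∑ k, ξ k * w k) = inner ℝ ξ (z - w) := by
            rw [PiLp.inner_apply]
            rw [← Finset.sum_sub_distrib]
            congr 1; funext k
            simp only [RCLike.inner_apply, conj_trivial, PiLp.sub_apply]
            ring
          have h3 : |(inner ℝ ξ (z-w) : ℝ)| ≤ ‖ξ‖ * ‖z - w‖ := abs_real_inner_le_norm ξ (z-w)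
          calc ‖ht ξ‖ * ‖Complex.exp (-Complex.I * (∑ k, ξ k * z k : ℝ)) -
                Complex.exp (-Complex.I * (∑ k, ξ k * w k : ℝ))‖
              ≤ ‖ht ξ‖ * (‖ξ‖ * ‖z - w‖) := by
                apply mul_le_mul_of_nonneg_left _ (norm_nonneg _)
                rw [h2] at h1
                exact h1.trans h3
            _ = ‖ht ξ‖ * ‖ξ‖ * ‖z - w‖ := by ring
    _ = (∫ ξ : EuclideanSpace ℝ (Fin n), ‖ht ξ‖ * ‖ξ‖) * ‖z - w‖ := by
        rw [integral_mul_const]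

/-- value at `0`. -/
lemma gFun_zero : gFun n ht 0 =
    (((2 * Real.pi) ^ n)⁻¹ : ℝ) • ∫ ξ : EuclideanSpace ℝ (Fin n), ht ξ := by
  rw [gFun]
  have : (fun ξ : EuclideanSpace ℝ (Fin n) =>
      ht ξ * Complex.exp (-Complex.I * (∑ k, ξ k * (0 : EuclideanSpace ℝ (Fin n)) k : ℝ))) = ht := by
    funext ξ
    have h0 : (∑ k, ξ k * (0 : EuclideanSpace ℝ (Fin n)) k) = (0:ℝ) := by simp
    rw [h0]
    simp
  rw [this]

lemma gFun_continuous (htcont : Continuous ht) (htc : HasCompactSupport ht) :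
    Continuous (gFun n ht) := by
  rw [Metric.continuous_iff]
  intro z ε hε
  set L := (((2 * Real.pi) ^ n)⁻¹ * ∫ ξ : EuclideanSpace ℝ (Fin n), ‖ht ξ‖ * ‖ξ‖) with hL
  have hL0 : 0 ≤ L := by
    apply mul_nonneg (by positivity)
    apply integral_nonneg; intro ξ; positivity
  refine ⟨ε / (L + 1), by positivity, fun w hw => ?_⟩
  rw [dist_eq_norm]
  calc ‖gFun n ht w - gFun n ht z‖ ≤ L * ‖w - z‖ := gFun_lip htcont htc w z
    _ ≤ L * (ε / (L + 1)) := by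
        apply mul_le_mul_of_nonneg_left _ hL0
        rw [← dist_eq_norm]; exact hw.le
    _ < ε := by
        rw [div_eq_mul_inv]
        have : L * (ε * (L+1)⁻¹) = ε * (L * (L+1)⁻¹) := by ring
        rw [this]
        have h2 : L * (L+1)⁻¹ < 1 := by
          rw [mul_inv_lt_iff₀ (by linarith)]; linarith
        nlinarith

lemma aux_two_rpow_half_le (n : ℕ) : (2:ℝ) ^ ((n:ℝ)/2) ≤ 2 ^ n := by
  have h := Real.rpow_le_rpow_of_exponent_le (one_le_two (α := ℝ))
    (show (n:ℝ)/2 ≤ (n:ℝ) by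
      have : (0:ℝ) ≤ (n:ℝ) := Nat.cast_nonneg n
      linarith)
  rwa [Real.rpow_natCast] at h

lemma aux_four_rpow_half (n : ℕ) : (4:ℝ) ^ ((n:ℝ)/2) = 2 ^ n := by
  have h4 : (4:ℝ) = (2:ℝ) ^ (2:ℝ) := by
    rw [show (2:ℝ) = ((2:ℕ):ℝ) by norm_num]
    rw [Real.rpow_natCast]
    norm_num
  rw [h4, ← Real.rpow_mul (by norm_num : (0:ℝ) ≤ 2)]
  rw [show (2:ℝ) * ((n:ℝ)/2) = (n:ℝ) by ring, Real.rpow_natCast]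

set_option maxHeartbeats 1600000 in
/-- uniform convergence rate `c m₁ j^{-1/2}` of the delta-type
approximations `f_j = f ∗ δ_j` for `C¹` functions `f` supported in `B_a` with
`sup |f| + sup |∇f| ≤ m₁`, where
`δ_j(x) = (j/(4πa₁²))^{n/2} (1 - |x|²/(4a₁²))^j (𝓕⁻¹h̃)(x)` and `h̃` is a
smooth compactly supported function with `(2π)^{-n} ∫ h̃ = 1`. -/
theorem delta_sequence_uniform_rate
    (n : ℕ) (hn : 1 ≤ n) (a a₁ : ℝ) (ha : 0 < a) (haa₁ : a < a₁)
    (ht : EuclideanSpace ℝ (Fin n) → ℂ)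
    (hts : ContDiff ℝ (⊤ : ℕ∞) ht) (htc : HasCompactSupport ht)
    (htnorm : (((2 * Real.pi) ^ n)⁻¹ : ℝ) • (∫ ξ : EuclideanSpace ℝ (Fin n), ht ξ) = (1 : ℂ)) :
    ∃ c : ℝ, 0 < c ∧
      ∀ m₁ : ℝ, 0 < m₁ →
        ∀ f : EuclideanSpace ℝ (Fin n) → ℂ, ContDiff ℝ 1 f →
          (∀ x ∉ Metric.closedBall (0 : EuclideanSpace ℝ (Fin n)) a, f x = 0) →
          (⨆ x : EuclideanSpace ℝ (Fin n), ‖f x‖) +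
            (⨆ x : EuclideanSpace ℝ (Fin n), ‖fderiv ℝ f x‖) ≤ m₁ →
          ∀ j : ℕ, 1 ≤ j →
            ∀ x ∈ Metric.closedBall (0 : EuclideanSpace ℝ (Fin n)) a,
              ‖f x - ∫ y in Metric.closedBall (0 : EuclideanSpace ℝ (Fin n)) a,
                  f y * ((((j : ℝ) / (4 * Real.pi * a₁ ^ 2)) ^ ((n : ℝ) / 2) *
                      (1 - ‖x - y‖ ^ 2 / (4 * a₁ ^ 2)) ^ j : ℝ) *
                    ((((2 * Real.pi) ^ n)⁻¹ : ℝ) •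
                      ∫ ξ : EuclideanSpace ℝ (Fin n),
                        ht ξ * Complex.exp (-Complex.I * (∑ k, ξ k * (x - y) k : ℝ))))‖
                ≤ c * m₁ / Real.sqrt j := by
  classical
  have htcont : Continuous ht := hts.continuous
  have ha₁ : 0 < a₁ := lt_trans ha haa₁
  set M : ℝ := ((2 * Real.pi) ^ n)⁻¹ * ∫ ξ : EuclideanSpace ℝ (Fin n), ‖ht ξ‖ with hMdef
  set L : ℝ := ((2 * Real.pi) ^ n)⁻¹ * ∫ ξ : EuclideanSpace ℝ (Fin n), ‖ht ξ‖ * ‖ξ‖ with hLdef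
  have hM0 : 0 ≤ M := by
    apply mul_nonneg (by positivity)
    exact integral_nonneg fun ξ => norm_nonneg _
  have hL0 : 0 ≤ L := by
    apply mul_nonneg (by positivity)
    exact integral_nonneg fun ξ => by positivity
  set ε : ℝ := a ^ 2 / (2 * a₁ ^ 2) with hεdef
  have hε : 0 < ε := by positivity
  set c₀ : ℝ := 2 ^ n / ε + 48 * 2 ^ n + (L + M) * Real.sqrt (4 * a₁ ^ 2) * 2 ^ n with hc₀def
  have hc₀0 : 0 ≤ c₀ := by
    have h1 : (0:ℝ) ≤ 2 ^ n / ε := by positivity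
    have h2 : (0:ℝ) ≤ 48 * 2 ^ n := by positivity
    have h3 : (0:ℝ) ≤ (L + M) * Real.sqrt (4 * a₁ ^ 2) * 2 ^ n := by
      apply mul_nonneg (mul_nonneg (by linarith) (Real.sqrt_nonneg _)) (by positivity)
    rw [hc₀def]; linarith
  refine ⟨c₀ + 1, by linarith, ?_⟩
  intro m₁ hm₁ f hf hf0 hsup j hj x hx
  -- basic facts about j
  have hjR : (1:ℝ) ≤ (j:ℝ) := by exact_mod_cast hj
  have hjpos : (0:ℝ) < (j:ℝ) := by linarith
  have hsjpos : (0:ℝ) < Real.sqrt j := Real.sqrt_pos.mpr hjpos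
  have hsj1 : (1:ℝ) ≤ Real.sqrt j := by
    rw [show (1:ℝ) = Real.sqrt 1 by simp]
    exact Real.sqrt_le_sqrt hjR
  have hsjj : Real.sqrt j ≤ (j:ℝ) := by
    have h := Real.sqrt_le_sqrt (show (j:ℝ) ≤ (j:ℝ)^2 by nlinarith)
    rwa [Real.sqrt_sq hjpos.le] at h
  -- basic facts about f
  have hfc : Continuous f := hf.continuous
  have hfsupp : HasCompactSupport f :=
    HasCompactSupport.intro (isCompact_closedBall 0 a) hf0
  obtain ⟨C1, hC1⟩ := hfc.bounded_above_of_compact_support hfsupp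
  have hfdc : Continuous (fderiv ℝ f) := hf.continuous_fderiv one_ne_zero
  obtain ⟨C2, hC2⟩ := hfdc.bounded_above_of_compact_support (hfsupp.fderiv ℝ)
  have hbdd1 : BddAbove (Set.range fun y => ‖f y‖) :=
    ⟨C1, by rintro - ⟨y, rfl⟩; exact hC1 y⟩
  have hbdd2 : BddAbove (Set.range fun y => ‖fderiv ℝ f y‖) :=
    ⟨C2, by rintro - ⟨y, rfl⟩; exact hC2 y⟩
  have hsup1nn : 0 ≤ ⨆ y : EuclideanSpace ℝ (Fin n), ‖f y‖ :=
    Real.iSup_nonneg fun y => norm_nonneg _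
  have hsup2nn : 0 ≤ ⨆ y : EuclideanSpace ℝ (Fin n), ‖fderiv ℝ f y‖ :=
    Real.iSup_nonneg fun y => norm_nonneg _
  have hfle : ∀ y, ‖f y‖ ≤ m₁ := fun y => by
    have := le_ciSup hbdd1 y
    linarith
  have hdle : ∀ y, ‖fderiv ℝ f y‖ ≤ m₁ := fun y => by
    have := le_ciSup hbdd2 y
    linarith
  have hlip : ∀ u v : EuclideanSpace ℝ (Fin n), ‖f u - f v‖ ≤ m₁ * ‖u - v‖ := by
    intro u v
    exact Convex.norm_image_sub_le_of_norm_fderiv_le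
      (fun y _ => (hf.differentiable one_ne_zero) y) (fun y _ => hdle y)
      convex_univ (Set.mem_univ v) (Set.mem_univ u)
  -- kernel abbreviations
  set A : ℝ := ((j : ℝ) / (4 * Real.pi * a₁ ^ 2)) ^ ((n : ℝ) / 2) with hAdef
  have hA0 : 0 ≤ A := Real.rpow_nonneg (by positivity) _
  set κ : EuclideanSpace ℝ (Fin n) → ℝ :=
    fun z => A * (1 - ‖z‖ ^ 2 / (4 * a₁ ^ 2)) ^ j with hκdef
  set g : EuclideanSpace ℝ (Fin n) → ℂ := gFun n ht with hgdef
  have hg1 : g 0 = 1 := by rw [hgdef, gFun_zero]; exact htnorm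
  have hgM : ∀ z, ‖g z‖ ≤ M := fun z => gFun_bound htcont htc z
  have hgL : ∀ z w, ‖g z - g w‖ ≤ L * ‖z - w‖ := fun z w => gFun_lip htcont htc z w
  have hgcont : Continuous g := gFun_continuous htcont htc
  set S := Metric.closedBall (0 : EuclideanSpace ℝ (Fin n)) (2 * a) with hSdef
  have hScomp : IsCompact S := isCompact_closedBall _ _
  have hSmeas : MeasurableSet S := measurableSet_closedBall
  -- rewrite the integral as a convolution over S
  have hker : ∀ y : EuclideanSpace ℝ (Fin n),
      f y * ((((j : ℝ) / (4 * Real.pi * a₁ ^ 2)) ^ ((n : ℝ) / 2) *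
          (1 - ‖x - y‖ ^ 2 / (4 * a₁ ^ 2)) ^ j : ℝ) *
        ((((2 * Real.pi) ^ n)⁻¹ : ℝ) •
          ∫ ξ : EuclideanSpace ℝ (Fin n),
            ht ξ * Complex.exp (-Complex.I * (∑ k, ξ k * (x - y) k : ℝ))))
      = f y * ((κ (x - y) : ℝ) * g (x - y)) := fun y => rfl
  simp only [hker]
  have e1 : (∫ y in Metric.closedBall (0 : EuclideanSpace ℝ (Fin n)) a,
        f y * ((κ (x - y) : ℝ) * g (x - y)))
      = ∫ y : EuclideanSpace ℝ (Fin n), f y * ((κ (x - y) : ℝ) * g (x - y)) :=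
    setIntegral_eq_integral_of_forall_compl_eq_zero fun y hy => by
      rw [hf0 y hy, zero_mul]
  have e2 : (∫ y : EuclideanSpace ℝ (Fin n), f y * ((κ (x - y) : ℝ) * g (x - y)))
      = ∫ z : EuclideanSpace ℝ (Fin n), f (x - z) * ((κ (x - (x - z)) : ℝ) * g (x - (x - z))) :=
    (integral_sub_left_eq_self (fun y => f y * ((κ (x - y) : ℝ) * g (x - y))) volume x).symm
  have e4 : (∫ z : EuclideanSpace ℝ (Fin n), f (x - z) * ((κ z : ℝ) * g z))
      = ∫ z in S, f (x - z) * ((κ z : ℝ) * g z) := by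
    symm
    apply setIntegral_eq_integral_of_forall_compl_eq_zero
    intro z hz
    have hz' : 2 * a < ‖z‖ := by
      rw [hSdef] at hz
      simpa [Metric.mem_closedBall, dist_zero_right, not_le] using hz
    have hxz : x - z ∉ Metric.closedBall (0 : EuclideanSpace ℝ (Fin n)) a := by
      simp only [Metric.mem_closedBall, dist_zero_right, not_le]
      have hxa : ‖x‖ ≤ a := by
        simpa [Metric.mem_closedBall, dist_zero_right] using hx
      have : ‖z‖ ≤ ‖x‖ + ‖x - z‖ := by
        calc ‖z‖ = ‖x - (x - z)‖ := by rw [sub_sub_cancel]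
          _ ≤ ‖x‖ + ‖x - z‖ := norm_sub_le _ _
      linarith
    rw [hf0 _ hxz, zero_mul]
  change ‖f x - ∫ y in Metric.closedBall (0 : EuclideanSpace ℝ (Fin n)) a,
      f y * ((κ (x - y) : ℝ) * g (x - y))‖ ≤ (c₀ + 1) * m₁ / Real.sqrt j
  rw [e1, e2]
  simp only [sub_sub_cancel]
  rw [e4]
  -- integrability
  have hκcont : Continuous κ := by
    apply continuous_const.mul
    exact ((continuous_const.sub ((continuous_norm.pow 2).div_const _)).pow j)
  have hKcont : Continuous fun z : EuclideanSpace ℝ (Fin n) => ((κ z : ℝ) : ℂ) * g z :=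
    (Complex.continuous_ofReal.comp hκcont).mul hgcont
  have hint1 : IntegrableOn (fun z : EuclideanSpace ℝ (Fin n) => ((κ z : ℝ) : ℂ) * g z) S :=
    hKcont.continuousOn.integrableOn_compact hScomp
  have hint2 : IntegrableOn
      (fun z : EuclideanSpace ℝ (Fin n) => f (x - z) * (((κ z : ℝ) : ℂ) * g z)) S :=
    ((hfc.comp (continuous_const.sub continuous_id)).mul hKcont).continuousOn.integrableOn_compact
      hScomp
  have hint2' : IntegrableOn
      (fun z : EuclideanSpace ℝ (Fin n) => f x * (((κ z : ℝ) : ℂ) * g z)) S :=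
    hint1.const_mul (f x)
  -- splitting
  have hsplit : f x - (∫ z in S, f (x - z) * (((κ z : ℝ) : ℂ) * g z))
      = f x * (1 - ∫ z in S, ((κ z : ℝ) : ℂ) * g z)
        + ∫ z in S, (f x - f (x - z)) * (((κ z : ℝ) : ℂ) * g z) := by
    have h1 : (∫ z in S, (f x - f (x - z)) * (((κ z : ℝ) : ℂ) * g z))
        = (∫ z in S, f x * (((κ z : ℝ) : ℂ) * g z))
          - ∫ z in S, f (x - z) * (((κ z : ℝ) : ℂ) * g z) := by
      rw [← integral_sub hint2' hint2]
      congr 1; funext z; ring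
    have h2 : (∫ z in S, f x * (((κ z : ℝ) : ℂ) * g z))
        = f x * ∫ z in S, ((κ z : ℝ) : ℂ) * g z := integral_const_mul _ _
    rw [h1, h2]; ring
  -- pointwise kernel bounds
  have hzS : ∀ z ∈ S, ‖z‖ ≤ 2 * a := by
    intro z hz
    rw [hSdef] at hz
    simpa [Metric.mem_closedBall, dist_zero_right] using hz
  have ht01 : ∀ z ∈ S, ‖z‖ ^ 2 / (4 * a₁ ^ 2) ≤ 1 := by
    intro z hz
    have h1 : ‖z‖ ≤ 2 * a := hzS z hz
    have h2 : ‖z‖ ^ 2 ≤ 4 * a ^ 2 := by nlinarith [norm_nonneg z]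
    rw [div_le_one (by positivity)]
    nlinarith
  have hκnn : ∀ z ∈ S, 0 ≤ κ z := by
    intro z hz
    apply mul_nonneg hA0
    apply pow_nonneg
    have := ht01 z hz
    linarith
  -- Gaussian machinery
  have hπ0 : Real.pi ≠ 0 := Real.pi_ne_zero
  have ha₁0 : a₁ ≠ 0 := ne_of_gt ha₁
  have hj0 : (j:ℝ) ≠ 0 := ne_of_gt hjpos
  have hc1 : (0:ℝ) < (j:ℝ)/(4*a₁^2) := by positivity
  have hc2 : (0:ℝ) < (j:ℝ)/(8*a₁^2) := by positivity
  have hc4 : (0:ℝ) < (j:ℝ)/(16*a₁^2) := by positivity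
  have hgi1 := aux_gauss_integrable n hc1
  have hgi2 := aux_gauss_integrable n hc2
  have hgi4 := aux_gauss_integrable n hc4
  have hval1 : A * ∫ z : EuclideanSpace ℝ (Fin n),
      Real.exp (-((j:ℝ)/(4*a₁^2) * ‖z‖^2)) = 1 := by
    rw [aux_gauss_value n hc1, hAdef, ← Real.mul_rpow (by positivity) (by positivity)]
    rw [show ((j:ℝ)/(4*Real.pi*a₁^2)) * (Real.pi/((j:ℝ)/(4*a₁^2))) = 1 from by
      field_simp]
    exact Real.one_rpow _
  have hval2 : A * ∫ z : EuclideanSpace ℝ (Fin n),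
      Real.exp (-((j:ℝ)/(8*a₁^2) * ‖z‖^2)) = (2:ℝ) ^ ((n:ℝ)/2) := by
    rw [aux_gauss_value n hc2, hAdef, ← Real.mul_rpow (by positivity) (by positivity)]
    rw [show ((j:ℝ)/(4*Real.pi*a₁^2)) * (Real.pi/((j:ℝ)/(8*a₁^2))) = 2 from by
      field_simp; ring]
  have hval4 : A * ∫ z : EuclideanSpace ℝ (Fin n),
      Real.exp (-((j:ℝ)/(16*a₁^2) * ‖z‖^2)) = (2:ℝ) ^ n := by
    rw [aux_gauss_value n hc4, hAdef, ← Real.mul_rpow (by positivity) (by positivity)]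
    rw [show ((j:ℝ)/(4*Real.pi*a₁^2)) * (Real.pi/((j:ℝ)/(16*a₁^2))) = 4 from by
      field_simp; ring]
    exact aux_four_rpow_half n
  have hκle : ∀ z ∈ S, κ z ≤ A * Real.exp (-((j:ℝ)/(4*a₁^2) * ‖z‖^2)) := by
    intro z hz
    simp only [hκdef]
    apply mul_le_mul_of_nonneg_left _ hA0
    have h1 : (1 - ‖z‖^2/(4*a₁^2)) ≤ Real.exp (-(‖z‖^2/(4*a₁^2))) := by
      have := Real.add_one_le_exp (-(‖z‖^2/(4*a₁^2))); linarith
    calc (1 - ‖z‖^2/(4*a₁^2)) ^ j ≤ Real.exp (-(‖z‖^2/(4*a₁^2))) ^ j :=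
          pow_le_pow_left₀ (by have := ht01 z hz; linarith) h1 j
      _ = Real.exp (-((j:ℝ)/(4*a₁^2) * ‖z‖^2)) := by
          rw [← Real.exp_nat_mul]; congr 1; ring
  have hκint : IntegrableOn κ S volume := hκcont.continuousOn.integrableOn_compact hScomp
  have hG1 : Integrable (fun z : EuclideanSpace ℝ (Fin n) =>
      A * Real.exp (-((j:ℝ)/(4*a₁^2) * ‖z‖^2))) := hgi1.const_mul A
  have hfull1 : (∫ z : EuclideanSpace ℝ (Fin n),
      A * Real.exp (-((j:ℝ)/(4*a₁^2) * ‖z‖^2))) = 1 := by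
    rw [integral_const_mul]; exact hval1
  have hdecomp := integral_add_compl hSmeas hG1
  have hsub : (∫ z in S, (A * Real.exp (-((j:ℝ)/(4*a₁^2) * ‖z‖^2)) - κ z))
      = (∫ z in S, A * Real.exp (-((j:ℝ)/(4*a₁^2) * ‖z‖^2))) - ∫ z in S, κ z :=
    integral_sub hG1.integrableOn hκint
  have htail_nn : 0 ≤ ∫ z in Sᶜ, A * Real.exp (-((j:ℝ)/(4*a₁^2) * ‖z‖^2)) :=
    setIntegral_nonneg hSmeas.compl fun z _ => by positivity
  have hmid_nn : 0 ≤ ∫ z in S, (A * Real.exp (-((j:ℝ)/(4*a₁^2) * ‖z‖^2)) - κ z) :=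
    setIntegral_nonneg hSmeas fun z hz => sub_nonneg.mpr (hκle z hz)
  have heq : 1 - (∫ z in S, κ z)
      = (∫ z in Sᶜ, A * Real.exp (-((j:ℝ)/(4*a₁^2) * ‖z‖^2)))
        + ∫ z in S, (A * Real.exp (-((j:ℝ)/(4*a₁^2) * ‖z‖^2)) - κ z) := by
    rw [hsub]; linarith [hdecomp, hfull1]
  have htail : (∫ z in Sᶜ, A * Real.exp (-((j:ℝ)/(4*a₁^2) * ‖z‖^2)))
      ≤ 2^n/(ε * Real.sqrt j) := by
    have hpt : ∀ z ∈ Sᶜ, A * Real.exp (-((j:ℝ)/(4*a₁^2) * ‖z‖^2))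
        ≤ Real.exp (-(ε*(j:ℝ))) * (A * Real.exp (-((j:ℝ)/(8*a₁^2) * ‖z‖^2))) := by
      intro z hz
      have hz2a : 2*a ≤ ‖z‖ := by
        rw [Set.mem_compl_iff, hSdef] at hz
        simp only [Metric.mem_closedBall, dist_zero_right, not_le] at hz
        linarith
      have hsplitE : Real.exp (-((j:ℝ)/(4*a₁^2) * ‖z‖^2))
          = Real.exp (-((j:ℝ)/(8*a₁^2) * ‖z‖^2)) * Real.exp (-((j:ℝ)/(8*a₁^2) * ‖z‖^2)) := by
        rw [← Real.exp_add]; congr 1; ring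
      have hb1 : Real.exp (-((j:ℝ)/(8*a₁^2) * ‖z‖^2)) ≤ Real.exp (-(ε * (j:ℝ))) := by
        apply Real.exp_le_exp.mpr
        rw [hεdef, neg_le_neg_iff]
        have h4a : 4*a^2 ≤ ‖z‖^2 := by nlinarith
        calc a^2/(2*a₁^2) * (j:ℝ) = (j:ℝ)/(8*a₁^2) * (4*a^2) := by ring
          _ ≤ (j:ℝ)/(8*a₁^2) * ‖z‖^2 := mul_le_mul_of_nonneg_left h4a hc2.le
      rw [hsplitE]
      calc A * (Real.exp (-((j:ℝ)/(8*a₁^2) * ‖z‖^2)) * Real.exp (-((j:ℝ)/(8*a₁^2) * ‖z‖^2)))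
          = Real.exp (-((j:ℝ)/(8*a₁^2) * ‖z‖^2)) * (A * Real.exp (-((j:ℝ)/(8*a₁^2) * ‖z‖^2))) := by
            ring
        _ ≤ Real.exp (-(ε*(j:ℝ))) * (A * Real.exp (-((j:ℝ)/(8*a₁^2) * ‖z‖^2))) := by
            apply mul_le_mul_of_nonneg_right hb1 (by positivity)
    calc (∫ z in Sᶜ, A * Real.exp (-((j:ℝ)/(4*a₁^2) * ‖z‖^2)))
        ≤ ∫ z in Sᶜ, Real.exp (-(ε*(j:ℝ))) * (A * Real.exp (-((j:ℝ)/(8*a₁^2) * ‖z‖^2))) :=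
          setIntegral_mono_on hG1.integrableOn
            (((hgi2.const_mul A).const_mul _).integrableOn) hSmeas.compl hpt
      _ = Real.exp (-(ε*(j:ℝ))) * ∫ z in Sᶜ, A * Real.exp (-((j:ℝ)/(8*a₁^2) * ‖z‖^2)) :=
          integral_const_mul _ _
      _ ≤ Real.exp (-(ε*(j:ℝ))) * ∫ z : EuclideanSpace ℝ (Fin n),
            A * Real.exp (-((j:ℝ)/(8*a₁^2) * ‖z‖^2)) := by
          apply mul_le_mul_of_nonneg_left _ (Real.exp_pos _).le
          apply setIntegral_le_integral (hgi2.const_mul A)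
          filter_upwards with z
          positivity
      _ = Real.exp (-(ε*(j:ℝ))) * (2:ℝ)^((n:ℝ)/2) := by
          rw [integral_const_mul, hval2]
      _ ≤ (1/(ε*(j:ℝ))) * 2^n := by
          apply mul_le_mul _ (aux_two_rpow_half_le n) (by positivity) (by positivity)
          have h1 : ε*(j:ℝ) ≤ Real.exp (ε*(j:ℝ)) := by
            have := Real.add_one_le_exp (ε*(j:ℝ)); linarith
          rw [Real.exp_neg, one_div]
          exact inv_anti₀ (by positivity) h1
      _ = 2^n/(ε * (j:ℝ)) := by ring
      _ ≤ 2^n/(ε * Real.sqrt j) := by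
          gcongr
  have hmid : (∫ z in S, (A * Real.exp (-((j:ℝ)/(4*a₁^2) * ‖z‖^2)) - κ z))
      ≤ 48 * 2^n / Real.sqrt j := by
    have hpt : ∀ z ∈ S, A * Real.exp (-((j:ℝ)/(4*a₁^2) * ‖z‖^2)) - κ z
        ≤ (48/(j:ℝ)) * (A * Real.exp (-((j:ℝ)/(16*a₁^2) * ‖z‖^2))) := by
      intro z hz
      have hkey := aux_key_pow j hj (t := ‖z‖^2/(4*a₁^2)) (by positivity) (ht01 z hz)
      rw [show (-((j:ℝ) * (‖z‖^2/(4*a₁^2)))) = -((j:ℝ)/(4*a₁^2) * ‖z‖^2) by ring] at hkey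
      rw [show (-((j:ℝ)/(4*a₁^2) * ‖z‖^2)/4) = -((j:ℝ)/(16*a₁^2) * ‖z‖^2) by ring] at hkey
      simp only [hκdef]
      calc A * Real.exp (-((j:ℝ)/(4*a₁^2) * ‖z‖^2)) - A * (1 - ‖z‖^2/(4*a₁^2)) ^ j
          = A * (Real.exp (-((j:ℝ)/(4*a₁^2) * ‖z‖^2)) - (1 - ‖z‖^2/(4*a₁^2)) ^ j) := by ring
        _ ≤ A * (48/(j:ℝ) * Real.exp (-((j:ℝ)/(16*a₁^2) * ‖z‖^2))) :=
            mul_le_mul_of_nonneg_left hkey hA0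
        _ = (48/(j:ℝ)) * (A * Real.exp (-((j:ℝ)/(16*a₁^2) * ‖z‖^2))) := by ring
    calc (∫ z in S, (A * Real.exp (-((j:ℝ)/(4*a₁^2) * ‖z‖^2)) - κ z))
        ≤ ∫ z in S, (48/(j:ℝ)) * (A * Real.exp (-((j:ℝ)/(16*a₁^2) * ‖z‖^2))) :=
          setIntegral_mono_on (hG1.integrableOn.sub hκint)
            (((hgi4.const_mul A).const_mul _).integrableOn) hSmeas hpt
      _ ≤ ∫ z : EuclideanSpace ℝ (Fin n),
            (48/(j:ℝ)) * (A * Real.exp (-((j:ℝ)/(16*a₁^2) * ‖z‖^2))) := by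
          apply setIntegral_le_integral ((hgi4.const_mul A).const_mul _)
          filter_upwards with z
          positivity
      _ = (48/(j:ℝ)) * (A * ∫ z : EuclideanSpace ℝ (Fin n),
            Real.exp (-((j:ℝ)/(16*a₁^2) * ‖z‖^2))) := by
          rw [integral_const_mul, integral_const_mul]
      _ = (48/(j:ℝ)) * 2^n := by rw [hval4]
      _ = 48 * 2^n / (j:ℝ) := by ring
      _ ≤ 48 * 2^n / Real.sqrt j := by
          gcongr
  have hr_nonneg_est : 0 ≤ 1 - (∫ z in S, κ z) ∧
      1 - (∫ z in S, κ z) ≤ (2 ^ n / ε + 48 * 2 ^ n) / Real.sqrt j := by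
    constructor
    · rw [heq]; linarith
    · rw [heq]
      calc (∫ z in Sᶜ, A * Real.exp (-((j:ℝ)/(4*a₁^2) * ‖z‖^2)))
            + (∫ z in S, (A * Real.exp (-((j:ℝ)/(4*a₁^2) * ‖z‖^2)) - κ z))
          ≤ 2^n/(ε * Real.sqrt j) + 48 * 2^n / Real.sqrt j := add_le_add htail hmid
        _ = (2 ^ n / ε + 48 * 2 ^ n) / Real.sqrt j := by
            field_simp
  have hI1 : (∫ z in S, κ z * ‖z‖)
      ≤ Real.sqrt (4 * a₁ ^ 2) * 2 ^ n / Real.sqrt j := by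
    have hpt : ∀ z ∈ S, κ z * ‖z‖
        ≤ (Real.sqrt (4*a₁^2)/Real.sqrt j) * (A * Real.exp (-((j:ℝ)/(8*a₁^2) * ‖z‖^2))) := by
      intro z hz
      have h2 := aux_mom1 hc1 (norm_nonneg z)
      rw [show (-((j:ℝ)/(4*a₁^2) * ‖z‖^2 / 2)) = -((j:ℝ)/(8*a₁^2) * ‖z‖^2) by ring] at h2
      have h4 : 1/Real.sqrt ((j:ℝ)/(4*a₁^2)) = Real.sqrt (4*a₁^2)/Real.sqrt j := by
        rw [Real.sqrt_div (le_of_lt hjpos) _, one_div_div]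
      rw [h4] at h2
      calc κ z * ‖z‖ ≤ (A * Real.exp (-((j:ℝ)/(4*a₁^2) * ‖z‖^2))) * ‖z‖ :=
            mul_le_mul_of_nonneg_right (hκle z hz) (norm_nonneg z)
        _ = A * (‖z‖ * Real.exp (-((j:ℝ)/(4*a₁^2) * ‖z‖^2))) := by ring
        _ ≤ A * (Real.sqrt (4*a₁^2)/Real.sqrt j * Real.exp (-((j:ℝ)/(8*a₁^2) * ‖z‖^2))) :=
            mul_le_mul_of_nonneg_left h2 hA0
        _ = (Real.sqrt (4*a₁^2)/Real.sqrt j) * (A * Real.exp (-((j:ℝ)/(8*a₁^2) * ‖z‖^2))) := by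
            ring
    calc (∫ z in S, κ z * ‖z‖)
        ≤ ∫ z in S, (Real.sqrt (4*a₁^2)/Real.sqrt j)
            * (A * Real.exp (-((j:ℝ)/(8*a₁^2) * ‖z‖^2))) :=
          setIntegral_mono_on
            ((hκcont.mul continuous_norm).continuousOn.integrableOn_compact hScomp)
            (((hgi2.const_mul A).const_mul _).integrableOn) hSmeas hpt
      _ ≤ ∫ z : EuclideanSpace ℝ (Fin n), (Real.sqrt (4*a₁^2)/Real.sqrt j)
            * (A * Real.exp (-((j:ℝ)/(8*a₁^2) * ‖z‖^2))) := by
          apply setIntegral_le_integral ((hgi2.const_mul A).const_mul _)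
          filter_upwards with z
          positivity
      _ = (Real.sqrt (4*a₁^2)/Real.sqrt j) * (A * ∫ z : EuclideanSpace ℝ (Fin n),
            Real.exp (-((j:ℝ)/(8*a₁^2) * ‖z‖^2))) := by
          rw [integral_const_mul, integral_const_mul]
      _ = (Real.sqrt (4*a₁^2)/Real.sqrt j) * (2:ℝ)^((n:ℝ)/2) := by rw [hval2]
      _ ≤ Real.sqrt (4 * a₁ ^ 2) * 2 ^ n / Real.sqrt j := by
          rw [div_mul_eq_mul_div]
          gcongr
          exact aux_two_rpow_half_le n
  have hI1nn : 0 ≤ ∫ z in S, κ z * ‖z‖ :=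
    setIntegral_nonneg hSmeas fun z hz => mul_nonneg (hκnn z hz) (norm_nonneg _)
  have hKest : ‖1 - ∫ z in S, ((κ z : ℝ) : ℂ) * g z‖
      ≤ (1 - (∫ z in S, κ z)) + L * ∫ z in S, κ z * ‖z‖ := by
    have hfn : ∀ z : EuclideanSpace ℝ (Fin n),
        ((κ z : ℝ) : ℂ) * g z = ((κ z : ℝ) : ℂ) * (g z - 1) + ((κ z : ℝ) : ℂ) := by
      intro z; ring
    have hint4 : IntegrableOn
        (fun z : EuclideanSpace ℝ (Fin n) => ((κ z : ℝ) : ℂ) * (g z - 1)) S :=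
      ((Complex.continuous_ofReal.comp hκcont).mul
        (hgcont.sub continuous_const)).continuousOn.integrableOn_compact hScomp
    have hint5 : IntegrableOn
        (fun z : EuclideanSpace ℝ (Fin n) => ((κ z : ℝ) : ℂ)) S :=
      (Complex.continuous_ofReal.comp hκcont).continuousOn.integrableOn_compact hScomp
    have hsplitK : (∫ z in S, ((κ z : ℝ) : ℂ) * g z)
        = (∫ z in S, ((κ z : ℝ) : ℂ) * (g z - 1)) + (((∫ z in S, κ z : ℝ)) : ℂ) := by
      simp only [hfn]
      rw [integral_add hint4 hint5]
      congr 1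
      exact integral_ofReal
    calc ‖1 - ∫ z in S, ((κ z : ℝ) : ℂ) * g z‖
        = ‖(((1 - (∫ z in S, κ z) : ℝ)) : ℂ) - ∫ z in S, ((κ z : ℝ) : ℂ) * (g z - 1)‖ := by
          rw [hsplitK]
          congr 1
          push_cast
          ring
      _ ≤ ‖(((1 - (∫ z in S, κ z) : ℝ)) : ℂ)‖ + ‖∫ z in S, ((κ z : ℝ) : ℂ) * (g z - 1)‖ :=
          norm_sub_le _ _
      _ ≤ (1 - (∫ z in S, κ z)) + L * ∫ z in S, κ z * ‖z‖ := by
          apply add_le_add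
          · rw [Complex.norm_real, Real.norm_eq_abs, abs_of_nonneg hr_nonneg_est.1]
          · calc ‖∫ z in S, ((κ z : ℝ) : ℂ) * (g z - 1)‖
                ≤ ∫ z in S, ‖((κ z : ℝ) : ℂ) * (g z - 1)‖ := norm_integral_le_integral_norm _
              _ ≤ ∫ z in S, L * (κ z * ‖z‖) := by
                  apply setIntegral_mono_on hint4.norm
                    ((continuous_const.mul
                      (hκcont.mul continuous_norm)).continuousOn.integrableOn_compact hScomp)
                    hSmeas
                  intro z hz
                  rw [norm_mul, Complex.norm_real, Real.norm_eq_abs, abs_of_nonneg (hκnn z hz)]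
                  have hgz : ‖g z - 1‖ ≤ L * ‖z‖ := by
                    have h := hgL z 0
                    rwa [hg1, sub_zero] at h
                  calc κ z * ‖g z - 1‖ ≤ κ z * (L * ‖z‖) :=
                        mul_le_mul_of_nonneg_left hgz (hκnn z hz)
                    _ = L * (κ z * ‖z‖) := by ring
              _ = L * ∫ z in S, κ z * ‖z‖ := integral_const_mul _ _
  -- final assembly
  rw [hsplit]
  calc ‖f x * (1 - ∫ z in S, ((κ z : ℝ) : ℂ) * g z)
        + ∫ z in S, (f x - f (x - z)) * (((κ z : ℝ) : ℂ) * g z)‖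
      ≤ ‖f x * (1 - ∫ z in S, ((κ z : ℝ) : ℂ) * g z)‖
        + ‖∫ z in S, (f x - f (x - z)) * (((κ z : ℝ) : ℂ) * g z)‖ := norm_add_le _ _
    _ ≤ m₁ * ‖1 - ∫ z in S, ((κ z : ℝ) : ℂ) * g z‖
        + ∫ z in S, ‖(f x - f (x - z)) * (((κ z : ℝ) : ℂ) * g z)‖ := by
        apply add_le_add
        · rw [norm_mul]
          exact mul_le_mul_of_nonneg_right (hfle x) (norm_nonneg _)
        · exact norm_integral_le_integral_norm _
    _ ≤ m₁ * ‖1 - ∫ z in S, ((κ z : ℝ) : ℂ) * g z‖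
        + ∫ z in S, (m₁ * M) * (κ z * ‖z‖) := by
        apply add_le_add_right
        apply setIntegral_mono_on
        · exact ((continuous_const.sub (hfc.comp
            (continuous_const.sub continuous_id))).mul
            hKcont).norm.continuousOn.integrableOn_compact hScomp
        · exact ((continuous_const.mul (hκcont.mul
            continuous_norm))).continuousOn.integrableOn_compact hScomp
        · exact hSmeas
        · intro z hz
          have l1 : ‖f x - f (x - z)‖ ≤ m₁ * ‖z‖ := by
            have h := hlip x (x - z)
            rwa [sub_sub_cancel] at h
          have l2 : ‖((κ z : ℝ) : ℂ) * g z‖ ≤ κ z * M := by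
            rw [norm_mul, Complex.norm_real, Real.norm_eq_abs,
              abs_of_nonneg (hκnn z hz)]
            exact mul_le_mul_of_nonneg_left (hgM z) (hκnn z hz)
          calc ‖(f x - f (x - z)) * (((κ z : ℝ) : ℂ) * g z)‖
              = ‖f x - f (x - z)‖ * ‖((κ z : ℝ) : ℂ) * g z‖ := norm_mul _ _
            _ ≤ (m₁ * ‖z‖) * (κ z * M) := by
                apply mul_le_mul l1 l2 (norm_nonneg _) (by positivity)
            _ = (m₁ * M) * (κ z * ‖z‖) := by ring
    _ = m₁ * ‖1 - ∫ z in S, ((κ z : ℝ) : ℂ) * g z‖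
        + (m₁ * M) * ∫ z in S, κ z * ‖z‖ := by rw [integral_const_mul]
    _ ≤ m₁ * ((2 ^ n / ε + 48 * 2 ^ n) / Real.sqrt j
          + L * (Real.sqrt (4 * a₁ ^ 2) * 2 ^ n / Real.sqrt j))
        + (m₁ * M) * (Real.sqrt (4 * a₁ ^ 2) * 2 ^ n / Real.sqrt j) := by
        have hX : ‖1 - ∫ z in S, ((κ z : ℝ) : ℂ) * g z‖
            ≤ (2 ^ n / ε + 48 * 2 ^ n) / Real.sqrt j
              + L * (Real.sqrt (4 * a₁ ^ 2) * 2 ^ n / Real.sqrt j) :=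
          hKest.trans (add_le_add hr_nonneg_est.2 (mul_le_mul_of_nonneg_left hI1 hL0))
        exact add_le_add (mul_le_mul_of_nonneg_left hX hm₁.le)
          (mul_le_mul_of_nonneg_left hI1 (by positivity))
    _ = c₀ * m₁ / Real.sqrt j := by
        rw [hc₀def]
        field_simp
        ring
    _ ≤ (c₀ + 1) * m₁ / Real.sqrt j := by
        gcongr
        linarith
end
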